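/- arXiv:math/0602643 — 4 statements merged into one kernel-verified Lean document; each statement's English description precedes it below -/
import Mathlib

section
/- (Theorem 3.1, algebraic form.) Let 0 = x₀ < ⋯ < x_{n+1} = 1 be a grid, ε, b, c reals, f : [0,1] → ℝ continuous. Let A be the n×n matrix with entries A_{ij} = a(φⱼ, φᵢ), and assume A is invertible. Let Uⁿ ∈ ℝⁿ satisfy A·Uⁿ = F where Fⱼ = ∫₀¹ f·φⱼ. Fix s₁ ∈ (xₙ, 1), let φ̃ₙ and φ_{s₁} be the hat functions at xₙ and s₁ on the refined grid, and suppose (u₁, …, uₙ, u_{s₁}) ∈ ℝ^{n+1} satisfies the refined Galerkin system: Σ_{i=1}^{n−1} uᵢ a(φᵢ, ψ) + uₙ a(φ̃ₙ, ψ) + u_{s₁} a(φ_{s₁}, ψ) = ∫₀¹ f·ψ for every ψ ∈ {φ₁, …, φ_{n−1}, φ̃ₙ, φ_{s₁}}. Then Uⁿ − (u₁, …, uₙ) = C·A⁻¹eₙ, where eₙ = (0, …, 0, 1)ᵗ, p = (1 − s₁)/(1 − xₙ), and C = (u_{s₁} − p·uₙ)·a(φ_{s₁}, φₙ). -/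
open Matrix MeasureTheory

/-- The hat (tent) function with support `[l, r]`, peak value 1 at `m`,
equal to `(t - l)/(m - l)` on `[l, m]` and `(r - t)/(r - m)` on `[m, r]`. -/
noncomputable def hat3 (l m r t : ℝ) : ℝ :=
  if l ≤ t ∧ t ≤ m then (t - l) / (m - l)
  else if m ≤ t ∧ t ≤ r then (r - t) / (r - m)
  else 0

/-- The piecewise derivative of `hat3 l m r`. -/
noncomputable def hat3D (l m r t : ℝ) : ℝ :=
  if l < t ∧ t < m then 1 / (m - l)
  else if m < t ∧ t < r then -(1 / (r - m))
  else 0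

/-- The hat function at node `i` of the grid `y`. -/
noncomputable def hatFn (y : ℕ → ℝ) (i : ℕ) : ℝ → ℝ :=
  hat3 (y (i - 1)) (y i) (y (i + 1))

/-- The piecewise derivative of the hat function at node `i` of the grid `y`. -/
noncomputable def hatDeriv (y : ℕ → ℝ) (i : ℕ) : ℝ → ℝ :=
  hat3D (y (i - 1)) (y i) (y (i + 1))

/-- The bilinear form `a(u, v) = ε∫₀¹ u'v' + b∫₀¹ u v' + c∫₀¹ u v`, where the (piecewise)
derivatives `u'`, `v'` are supplied explicitly as `uD`, `vD`. -/
noncomputable def bform (ε b c : ℝ) (u uD v vD : ℝ → ℝ) : ℝ :=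
  ε * (∫ t in (0:ℝ)..1, uD t * vD t)
    + b * (∫ t in (0:ℝ)..1, u t * vD t)
    + c * (∫ t in (0:ℝ)..1, u t * v t)

/-- `y` is a grid `0 = y₀ < y₁ < ⋯ < y_{N+1} = 1` with `N` interior nodes. -/
def IsGrid (y : ℕ → ℝ) (N : ℕ) : Prop :=
  y 0 = 0 ∧ y (N + 1) = 1 ∧ ∀ i ≤ N, y i < y (i + 1)

/-- The load `∫₀¹ f·φⱼ` for the grid `y`. -/
noncomputable def load (f : ℝ → ℝ) (y : ℕ → ℝ) (j : ℕ) : ℝ :=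
  ∫ t in (0:ℝ)..1, f t * hatFn y j t

/-- `w` (as coefficients at the interior nodes `y 1, …, y N`) is a Galerkin finite element
solution on the grid `y`: its `a`-pairing with every nodal basis hat function equals the
corresponding load. -/
def IsGalerkinSol (ε b c : ℝ) (f : ℝ → ℝ) (y : ℕ → ℝ) (N : ℕ) (w : ℕ → ℝ) : Prop :=
  ∀ j, 1 ≤ j → j ≤ N →
    (∑ i ∈ Finset.Icc 1 N,
        w i * bform ε b c (hatFn y i) (hatDeriv y i) (hatFn y j) (hatDeriv y j))
      = load f y j

/-- The stiffness matrix `A` with `A i j = a(φ_{j+1}, φ_{i+1})` (`0`-based `Fin` indices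
corresponding to the interior nodes `y 1, …, y n`). -/
noncomputable def stiff (ε b c : ℝ) (y : ℕ → ℝ) (n : ℕ) : Matrix (Fin n) (Fin n) ℝ :=
  fun i j => bform ε b c (hatFn y ((j : ℕ) + 1)) (hatDeriv y ((j : ℕ) + 1))
      (hatFn y ((i : ℕ) + 1)) (hatDeriv y ((i : ℕ) + 1))

/-- The affine function on `[α, β]` through `(α, ya)` and `(β, yb)`. -/
noncomputable def affInterp (α β ya yb t : ℝ) : ℝ :=
  ya + (yb - ya) * (t - α) / (β - α)

/-!
On the refined grid the coarse hat at `xₙ` splits as `φₙ = φ̃ₙ + p φ_{s₁}` with `p = φₙ(s₁)`,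
and every other coarse hat is a refined hat, so the refined Galerkin equations also hold against
every coarse hat. Write the refined solution `Σ uᵢ φ̃ᵢ + u_{s₁} φ_{s₁}` as the coarse function
`Σ uᵢ φᵢ` plus `(u_{s₁} − p uₙ) φ_{s₁}`. Since `φ_{s₁}` is `a`-orthogonal to `φ₁, …, φ_{n−1}`
(disjoint supports), this gives `A u = F − C eₙ`, and subtracting from `A Uⁿ = F` yields
`A (Uⁿ − u) = C eₙ`.
-/
section Hat3

variable {a l m r s t : ℝ}

lemma hat3_eq_zero_of_le_left (hlm : l < m) (ht : t ≤ l) : hat3 l m r t = 0 := by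
  unfold hat3
  split_ifs with h₁ h₂
  · simp [le_antisymm ht h₁.1]
  · linarith [h₂.1]
  · rfl

lemma hat3_eq_zero_of_right_le (hmr : m < r) (ht : r ≤ t) : hat3 l m r t = 0 := by
  unfold hat3
  split_ifs with h₁ h₂
  · linarith [h₁.2]
  · simp [le_antisymm h₂.2 ht]
  · rfl

lemma hat3D_eq_zero_of_le_left (hlm : l ≤ m) (ht : t ≤ l) : hat3D l m r t = 0 := by
  unfold hat3D
  split_ifs with h₁ h₂ <;> first | rfl | linarith [h₁.1] | linarith [h₂.1]

lemma hat3D_eq_zero_of_right_le (hmr : m ≤ r) (ht : r ≤ t) : hat3D l m r t = 0 := by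
  unfold hat3D
  split_ifs with h₁ h₂ <;> first | rfl | linarith [h₁.2] | linarith [h₂.2]

lemma hat3_split (hab : a < m) (hms : m < s) (hsr : s < r) :
    hat3 a m r t = hat3 a m s t + (r - s) / (r - m) * hat3 m s r t := by
  have : r - m ≠ 0 := by linarith
  have : s - m ≠ 0 := by linarith
  have : r - s ≠ 0 := by linarith
  have : m - a ≠ 0 := by linarith
  rcases eq_or_ne t m with rfl | htm
  · simp [hat3, hab.le, hms.le, div_self, *]
  unfold hat3
  split_ifs <;> first | (exfalso; grind) | (field_simp; ring)

lemma hat3D_split (hms : m < s) (hsr : s < r) (hts : t ≠ s) :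
    hat3D a m r t = hat3D a m s t + (r - s) / (r - m) * hat3D m s r t := by
  have : r - m ≠ 0 := by linarith
  have : s - m ≠ 0 := by linarith
  have : r - s ≠ 0 := by linarith
  unfold hat3D
  split_ifs <;> first | (exfalso; grind) | (field_simp; ring)

end Hat3

lemma measurable_hat3 (l m r : ℝ) : Measurable (hat3 l m r) :=
  Measurable.ite measurableSet_Icc (by fun_prop) <|
    Measurable.ite measurableSet_Icc (by fun_prop) measurable_const

lemma measurable_hat3D (l m r : ℝ) : Measurable (hat3D l m r) :=
  Measurable.ite measurableSet_Ioo measurable_const <|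
    Measurable.ite measurableSet_Ioo measurable_const measurable_const

lemma abs_hat3_le_one (l m r t : ℝ) : |hat3 l m r t| ≤ 1 := by
  unfold hat3
  split_ifs with h₁ h₂
  · rw [abs_of_nonneg (div_nonneg (by linarith) (by linarith))]
    exact div_le_one_of_le₀ (by linarith) (by linarith)
  · rw [abs_of_nonneg (div_nonneg (by linarith) (by linarith))]
    exact div_le_one_of_le₀ (by linarith) (by linarith)
  · simp

lemma abs_hat3D_le (l m r t : ℝ) : |hat3D l m r t| ≤ |1 / (m - l)| + |1 / (r - m)| := by
  unfold hat3D
  split_ifs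
  · exact le_add_of_nonneg_right (abs_nonneg _)
  · rw [abs_neg]; exact le_add_of_nonneg_left (abs_nonneg _)
  · simp only [abs_zero]; positivity

lemma memLp_top_hat3 (l m r : ℝ) : MemLp (hat3 l m r) ⊤ volume :=
  memLp_top_of_bound (measurable_hat3 l m r).aestronglyMeasurable 1
    (ae_of_all _ (abs_hat3_le_one l m r))

lemma memLp_top_hat3D (l m r : ℝ) : MemLp (hat3D l m r) ⊤ volume :=
  memLp_top_of_bound (measurable_hat3D l m r).aestronglyMeasurable _
    (ae_of_all _ (abs_hat3D_le l m r))

section Integrals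

variable {a b p : ℝ} {g g₁ g₂ h : ℝ → ℝ}

lemma MeasureTheory.MemLp.intervalIntegrable_of_top (hg : MemLp g ⊤ volume) :
    IntervalIntegrable g volume a b := by
  rw [intervalIntegrable_iff]
  have : IsFiniteMeasure (volume.restrict (Set.uIoc a b)) :=
    isFiniteMeasure_restrict.mpr measure_Ioc_lt_top.ne
  exact (hg.restrict _).integrable le_top

lemma IntervalIntegrable.mul_of_top_right (hh : IntervalIntegrable h volume a b)
    (hg : MemLp g ⊤ volume) : IntervalIntegrable (fun t => h t * g t) volume a b := by
  rw [intervalIntegrable_iff] at hh ⊢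
  exact hh.mul_of_top_left (hg.restrict _)

lemma intervalIntegral.integral_mul_of_ae_eq_add (hg : g =ᵐ[volume] g₁ + p • g₂)
    (hh : IntervalIntegrable h volume a b) (hg₁ : MemLp g₁ ⊤ volume) (hg₂ : MemLp g₂ ⊤ volume) :
    ∫ t in a..b, h t * g t = (∫ t in a..b, h t * g₁ t) + p * ∫ t in a..b, h t * g₂ t := by
  rw [← intervalIntegral.integral_const_mul, ← intervalIntegral.integral_add
    (hh.mul_of_top_right hg₁) ((hh.mul_of_top_right hg₂).const_mul p)]
  refine intervalIntegral.integral_congr_ae ?_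
  filter_upwards [hg] with t ht _
  simp only [ht, Pi.add_apply, Pi.smul_apply, smul_eq_mul]
  ring

lemma intervalIntegral.integral_mul_of_ae_eq_add' (hg : g =ᵐ[volume] g₁ + p • g₂)
    (hh : IntervalIntegrable h volume a b) (hg₁ : MemLp g₁ ⊤ volume) (hg₂ : MemLp g₂ ⊤ volume) :
    ∫ t in a..b, g t * h t = (∫ t in a..b, g₁ t * h t) + p * ∫ t in a..b, g₂ t * h t := by
  simp only [mul_comm _ (h _)]
  exact integral_mul_of_ae_eq_add hg hh hg₁ hg₂

end Integrals

section BilinearForm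

variable {ε b c p : ℝ} {u uD u₁ uD₁ u₂ uD₂ v vD v₁ vD₁ v₂ vD₂ : ℝ → ℝ}

lemma bform_eq_add_left (hu : u =ᵐ[volume] u₁ + p • u₂) (huD : uD =ᵐ[volume] uD₁ + p • uD₂)
    (hu₁ : MemLp u₁ ⊤ volume) (huD₁ : MemLp uD₁ ⊤ volume) (hu₂ : MemLp u₂ ⊤ volume)
    (huD₂ : MemLp uD₂ ⊤ volume) (hv : MemLp v ⊤ volume) (hvD : MemLp vD ⊤ volume) :
    bform ε b c u uD v vD = bform ε b c u₁ uD₁ v vD + p * bform ε b c u₂ uD₂ v vD := by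
  unfold bform
  rw [intervalIntegral.integral_mul_of_ae_eq_add' huD hvD.intervalIntegrable_of_top huD₁ huD₂,
    intervalIntegral.integral_mul_of_ae_eq_add' hu hvD.intervalIntegrable_of_top hu₁ hu₂,
    intervalIntegral.integral_mul_of_ae_eq_add' hu hv.intervalIntegrable_of_top hu₁ hu₂]
  ring

lemma bform_eq_add_right (hv : v =ᵐ[volume] v₁ + p • v₂) (hvD : vD =ᵐ[volume] vD₁ + p • vD₂)
    (hv₁ : MemLp v₁ ⊤ volume) (hvD₁ : MemLp vD₁ ⊤ volume) (hv₂ : MemLp v₂ ⊤ volume)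
    (hvD₂ : MemLp vD₂ ⊤ volume) (hu : MemLp u ⊤ volume) (huD : MemLp uD ⊤ volume) :
    bform ε b c u uD v vD = bform ε b c u uD v₁ vD₁ + p * bform ε b c u uD v₂ vD₂ := by
  unfold bform
  rw [intervalIntegral.integral_mul_of_ae_eq_add hvD huD.intervalIntegrable_of_top hvD₁ hvD₂,
    intervalIntegral.integral_mul_of_ae_eq_add hvD hu.intervalIntegrable_of_top hvD₁ hvD₂,
    intervalIntegral.integral_mul_of_ae_eq_add hv hu.intervalIntegrable_of_top hv₁ hv₂]
  ring

lemma bform_eq_zero_of_separated (m : ℝ) (hu : ∀ t ≤ m, u t = 0) (huD : ∀ t ≤ m, uD t = 0)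
    (hv : ∀ t, m ≤ t → v t = 0) (hvD : ∀ t, m ≤ t → vD t = 0) : bform ε b c u uD v vD = 0 := by
  have hsep : ∀ {φ ψ : ℝ → ℝ}, (∀ t ≤ m, φ t = 0) → (∀ t, m ≤ t → ψ t = 0) →
      ∫ t in (0:ℝ)..1, φ t * ψ t = 0 := fun hφ hψ => by
    refine intervalIntegral.integral_zero_ae (ae_of_all _ fun t _ => ?_)
    rcases le_total t m with ht | ht
    · rw [hφ t ht, zero_mul]
    · rw [hψ t ht, mul_zero]
  simp only [bform, hsep huD hvD, hsep hu hvD, hsep hu hv, mul_zero, add_zero]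

end BilinearForm

lemma IsGrid.le_of_le {y : ℕ → ℝ} {N i j : ℕ} (hy : IsGrid y N) (hij : i ≤ j) (hj : j ≤ N + 1) :
    y i ≤ y j := by
  induction j, hij using Nat.le_induction with
  | base => exact le_rfl
  | succ k hik ih => exact (ih (by omega)).trans (hy.2.2 k (by omega)).le

lemma memLp_top_hatFn (y : ℕ → ℝ) (i : ℕ) : MemLp (hatFn y i) ⊤ volume := memLp_top_hat3 _ _ _

lemma memLp_top_hatDeriv (y : ℕ → ℝ) (i : ℕ) : MemLp (hatDeriv y i) ⊤ volume :=
  memLp_top_hat3D _ _ _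

noncomputable def hatForm (ε b c : ℝ) (x : ℕ → ℝ) (i : ℕ) (y : ℕ → ℝ) (j : ℕ) : ℝ :=
  bform ε b c (hatFn x i) (hatDeriv x i) (hatFn y j) (hatDeriv y j)

def RefinesLastCell (x y : ℕ → ℝ) (n : ℕ) : Prop :=
  IsGrid x n ∧ IsGrid y (n + 1) ∧ ∀ i ≤ n, y i = x i

namespace RefinesLastCell

variable {x y : ℕ → ℝ} {n : ℕ} {ε b c : ℝ} {w : ℕ → ℝ}

lemma hatFn_eq_of_lt (hxy : RefinesLastCell x y n) {i : ℕ} (hi : i < n) :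
    hatFn y i = hatFn x i := by
  simp only [hatFn, hxy.2.2 (i - 1) (by omega), hxy.2.2 i hi.le, hxy.2.2 (i + 1) hi]

lemma hatDeriv_eq_of_lt (hxy : RefinesLastCell x y n) {i : ℕ} (hi : i < n) :
    hatDeriv y i = hatDeriv x i := by
  simp only [hatDeriv, hxy.2.2 (i - 1) (by omega), hxy.2.2 i hi.le, hxy.2.2 (i + 1) hi]

lemma last_nodes_lt (hxy : RefinesLastCell x y n) (hn : 1 ≤ n) :
    x (n - 1) < x n ∧ x n < y (n + 1) ∧ y (n + 1) < 1 := by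
  obtain ⟨⟨-, -, hx⟩, ⟨-, hy1, hy⟩, hagree⟩ := hxy
  refine ⟨?_, ?_, ?_⟩
  · simpa [Nat.sub_add_cancel hn] using hx (n - 1) (by omega)
  · simpa [hagree n le_rfl] using hy n (by omega)
  · simpa [hy1] using hy (n + 1) le_rfl

lemma hatFn_eq_add (hxy : RefinesLastCell x y n) (hn : 1 ≤ n) :
    hatFn x n = hatFn y n + ((1 - y (n + 1)) / (1 - x n)) • hatFn y (n + 1) := by
  obtain ⟨h₁, h₂, h₃⟩ := hxy.last_nodes_lt hn
  ext t
  simp only [hatFn, Pi.add_apply, Pi.smul_apply, smul_eq_mul, Nat.add_sub_cancel, hxy.1.2.1,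
    hxy.2.1.2.1, hxy.2.2 n le_rfl, hxy.2.2 (n - 1) (by omega)]
  exact hat3_split h₁ h₂ h₃

lemma hatDeriv_ae_eq_add (hxy : RefinesLastCell x y n) (hn : 1 ≤ n) :
    hatDeriv x n =ᵐ[volume] hatDeriv y n + ((1 - y (n + 1)) / (1 - x n)) • hatDeriv y (n + 1) := by
  obtain ⟨h₁, h₂, h₃⟩ := hxy.last_nodes_lt hn
  filter_upwards [Measure.ae_ne volume (y (n + 1))] with t ht
  simp only [hatDeriv, Pi.add_apply, Pi.smul_apply, smul_eq_mul, Nat.add_sub_cancel, hxy.1.2.1,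
    hxy.2.1.2.1, hxy.2.2 n le_rfl, hxy.2.2 (n - 1) (by omega)]
  exact hat3D_split h₂ h₃ ht

lemma hatForm_left_eq_add (hxy : RefinesLastCell x y n) (hn : 1 ≤ n) (z : ℕ → ℝ) (j : ℕ) :
    hatForm ε b c x n z j
      = hatForm ε b c y n z j + (1 - y (n + 1)) / (1 - x n) * hatForm ε b c y (n + 1) z j :=
  bform_eq_add_left (hxy.hatFn_eq_add hn).eventuallyEq (hxy.hatDeriv_ae_eq_add hn)
    (memLp_top_hatFn _ _) (memLp_top_hatDeriv _ _) (memLp_top_hatFn _ _) (memLp_top_hatDeriv _ _)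
    (memLp_top_hatFn _ _) (memLp_top_hatDeriv _ _)

lemma hatForm_right_eq_add (hxy : RefinesLastCell x y n) (hn : 1 ≤ n) (z : ℕ → ℝ) (i : ℕ) :
    hatForm ε b c z i x n
      = hatForm ε b c z i y n + (1 - y (n + 1)) / (1 - x n) * hatForm ε b c z i y (n + 1) :=
  bform_eq_add_right (hxy.hatFn_eq_add hn).eventuallyEq (hxy.hatDeriv_ae_eq_add hn)
    (memLp_top_hatFn _ _) (memLp_top_hatDeriv _ _) (memLp_top_hatFn _ _) (memLp_top_hatDeriv _ _)
    (memLp_top_hatFn _ _) (memLp_top_hatDeriv _ _)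

lemma load_eq_add (hxy : RefinesLastCell x y n) (hn : 1 ≤ n) {f : ℝ → ℝ}
    (hf : ContinuousOn f (Set.Icc 0 1)) :
    load f x n = load f y n + (1 - y (n + 1)) / (1 - x n) * load f y (n + 1) :=
  intervalIntegral.integral_mul_of_ae_eq_add (hxy.hatFn_eq_add hn).eventuallyEq
    (hf.intervalIntegrable_of_Icc zero_le_one) (memLp_top_hatFn _ _) (memLp_top_hatFn _ _)

lemma hatForm_new_eq_zero (hxy : RefinesLastCell x y n) (hn : 1 ≤ n) {j : ℕ} (hj : j < n) :
    hatForm ε b c y (n + 1) x j = 0 := by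
  obtain ⟨-, hns, -⟩ := hxy.last_nodes_lt hn
  have hjn : x (j + 1) ≤ x n := hxy.1.le_of_le hj (by omega)
  have hxj : x j < x (j + 1) := hxy.1.2.2 j (by omega)
  have hyn : y (n + 1 - 1) = x n := hxy.2.2 n le_rfl
  refine bform_eq_zero_of_separated (x n) (fun t ht => ?_) (fun t ht => ?_) (fun t ht => ?_)
    (fun t ht => ?_)
  · rw [hatFn, hyn]; exact hat3_eq_zero_of_le_left hns ht
  · rw [hatDeriv, hyn]; exact hat3D_eq_zero_of_le_left hns.le ht
  · exact hat3_eq_zero_of_right_le hxj (hjn.trans ht)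
  · exact hat3D_eq_zero_of_right_le hxj.le (hjn.trans ht)

lemma sum_hatForm_refined_coarse_eq_load (hxy : RefinesLastCell x y n) (hn : 1 ≤ n) {f : ℝ → ℝ}
    (hf : ContinuousOn f (Set.Icc 0 1)) (hw : IsGalerkinSol ε b c f y (n + 1) w) {j : ℕ}
    (hj₁ : 1 ≤ j) (hjn : j ≤ n) :
    ∑ i ∈ Finset.Icc 1 (n + 1), w i * hatForm ε b c y i x j = load f x j := by
  rcases hjn.lt_or_eq with hj | hj
  · simpa only [hatForm, load, hxy.hatFn_eq_of_lt hj, hxy.hatDeriv_eq_of_lt hj]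
      using hw j hj₁ (by omega)
  subst j
  calc ∑ i ∈ Finset.Icc 1 (n + 1), w i * hatForm ε b c y i x n
      = ∑ i ∈ Finset.Icc 1 (n + 1), w i * hatForm ε b c y i y n
        + (1 - y (n + 1)) / (1 - x n)
          * ∑ i ∈ Finset.Icc 1 (n + 1), w i * hatForm ε b c y i y (n + 1) := by
        simp only [hxy.hatForm_right_eq_add hn, Finset.mul_sum, ← Finset.sum_add_distrib]
        exact Finset.sum_congr rfl fun i _ => by ring
    _ = load f y n + (1 - y (n + 1)) / (1 - x n) * load f y (n + 1) := by
        rw [← hw n hn (by omega), ← hw (n + 1) (by omega) le_rfl]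
        rfl
    _ = load f x n := (hxy.load_eq_add hn hf).symm

lemma sum_hatForm_coarse_eq_refined_add (hxy : RefinesLastCell x y n) (hn : 1 ≤ n) (j : ℕ) :
    ∑ i ∈ Finset.Icc 1 n, w i * hatForm ε b c x i x j
      = ∑ i ∈ Finset.Icc 1 n, w i * hatForm ε b c y i x j
        + (1 - y (n + 1)) / (1 - x n) * w n * hatForm ε b c y (n + 1) x j := by
  obtain ⟨m, rfl⟩ := Nat.exists_eq_add_of_le' hn
  rw [Finset.sum_Icc_succ_top hn, Finset.sum_Icc_succ_top hn, hxy.hatForm_left_eq_add hn]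
  have hlow : ∀ i ∈ Finset.Icc 1 m, w i * hatForm ε b c x i x j = w i * hatForm ε b c y i x j := by
    intro i hi
    have hi' : i < m + 1 := Nat.lt_succ_of_le (Finset.mem_Icc.mp hi).2
    rw [hatForm, hatForm, hxy.hatFn_eq_of_lt hi', hxy.hatDeriv_eq_of_lt hi']
  rw [Finset.sum_congr rfl hlow]
  ring

lemma sum_hatForm_coarse_eq_load_sub (hxy : RefinesLastCell x y n) (hn : 1 ≤ n) {f : ℝ → ℝ}
    (hf : ContinuousOn f (Set.Icc 0 1)) (hw : IsGalerkinSol ε b c f y (n + 1) w) {j : ℕ}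
    (hj₁ : 1 ≤ j) (hjn : j ≤ n) :
    ∑ i ∈ Finset.Icc 1 n, w i * hatForm ε b c x i x j
      = load f x j - if j = n then
          (w (n + 1) - (1 - y (n + 1)) / (1 - x n) * w n) * hatForm ε b c y (n + 1) x n
        else 0 := by
  have hcoarse := hxy.sum_hatForm_coarse_eq_refined_add (w := w) (ε := ε) (b := b) (c := c) hn j
  have htest := hxy.sum_hatForm_refined_coarse_eq_load hn hf hw hj₁ hjn
  rw [Finset.sum_Icc_succ_top (by omega)] at htest
  rcases hjn.lt_or_eq with hj | rfl
  · rw [hxy.hatForm_new_eq_zero hn hj] at hcoarse htest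
    rw [if_neg hj.ne]
    linarith
  · rw [if_pos rfl]
    linear_combination hcoarse + htest

end RefinesLastCell

lemma Matrix.sub_eq_smul_inv_mulVec {ι R : Type*} [Fintype ι] [DecidableEq ι] [CommRing R]
    {A : Matrix ι ι R} (hA : IsUnit A.det) {u v F e : ι → R} {C : R} (hu : A *ᵥ u = F)
    (hv : A *ᵥ v = F - C • e) : u - v = C • (A⁻¹ *ᵥ e) := by
  have hdiff : A *ᵥ (u - v) = C • e := by rw [mulVec_sub, hu, hv, sub_sub_cancel]
  rw [← mulVec_smul, ← hdiff, mulVec_mulVec, nonsing_inv_mul A hA, one_mulVec]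

lemma stiff_mulVec_apply (ε b c : ℝ) (x : ℕ → ℝ) (n : ℕ) (w : ℕ → ℝ) (j : Fin n) :
    (stiff ε b c x n *ᵥ fun i : Fin n => w (i + 1)) j
      = ∑ i ∈ Finset.Icc 1 n, w i * hatForm ε b c x i x (j + 1) := by
  rw [← Finset.Ico_add_one_right_eq_Icc, ← Finset.sum_Ico_add' _ 0 n 1, ← Finset.range_eq_Ico,
    ← Fin.sum_univ_eq_sum_range (fun i => w (i + 1) * hatForm ε b c x (i + 1) x (j + 1))]
  simp only [mulVec, dotProduct, stiff, hatForm, mul_comm]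

theorem statement6_general (n : ℕ) (x y : ℕ → ℝ) (ε b c : ℝ) (f : ℝ → ℝ)
    (hf : ContinuousOn f (Set.Icc 0 1))
    (hx : IsGrid x n) (hy : IsGrid y (n + 1))
    (hagree : ∀ i ≤ n, y i = x i)
    (A : Matrix (Fin n) (Fin n) ℝ) (hA : A = stiff ε b c x n) (hAdet : A.det ≠ 0)
    (Un : ℕ → ℝ)
    (hUn : A *ᵥ (fun j : Fin n => Un ((j : ℕ) + 1))
      = fun j : Fin n => load f x ((j : ℕ) + 1))
    (w : ℕ → ℝ) (hw : IsGalerkinSol ε b c f y (n + 1) w) :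
    (fun j : Fin n => Un ((j : ℕ) + 1) - w ((j : ℕ) + 1))
      = ((w (n + 1) - (1 - y (n + 1)) / (1 - x n) * w n)
            * bform ε b c (hatFn y (n + 1)) (hatDeriv y (n + 1)) (hatFn x n) (hatDeriv x n))
          • (A⁻¹ *ᵥ (fun j : Fin n => if (j : ℕ) = n - 1 then 1 else 0)) := by
  obtain rfl | hn := Nat.eq_zero_or_pos n
  · exact Subsingleton.elim _ _
  have hxy : RefinesLastCell x y n := ⟨hx, hy, hagree⟩
  refine Matrix.sub_eq_smul_inv_mulVec (isUnit_iff_ne_zero.mpr hAdet) hUn ?_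
  ext j
  have hlast : (j : ℕ) + 1 = n ↔ (j : ℕ) = n - 1 := by omega
  rw [hA, stiff_mulVec_apply, hxy.sum_hatForm_coarse_eq_load_sub hn hf hw (by omega) (by omega)]
  simp only [hlast, Pi.sub_apply, Pi.smul_apply, smul_eq_mul, mul_ite, mul_one, mul_zero, hatForm]

/-- Theorem 3.1, algebraic form: if `Uⁿ` solves `A·Uⁿ = F` on the original grid
`x` and `(u₁, …, uₙ, u_{s₁})` solves the refined Galerkin system on the grid `y` obtained from
`x` by inserting one point `s₁ = y (n+1) ∈ (xₙ, 1)`, then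
`Uⁿ − (u₁, …, uₙ) = C·A⁻¹eₙ` with `p = (1 − s₁)/(1 − xₙ)` and
`C = (u_{s₁} − p·uₙ)·a(φ_{s₁}, φₙ)`. -/
theorem statement6 (n : ℕ) (hn : 1 ≤ n) (x y : ℕ → ℝ) (ε b c : ℝ) (f : ℝ → ℝ)
    (hf : ContinuousOn f (Set.Icc 0 1))
    (hx : IsGrid x n) (hy : IsGrid y (n + 1))
    (hagree : ∀ i ≤ n, y i = x i)
    (A : Matrix (Fin n) (Fin n) ℝ) (hA : A = stiff ε b c x n) (hAdet : A.det ≠ 0)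
    (Un : ℕ → ℝ)
    (hUn : A *ᵥ (fun j : Fin n => Un ((j : ℕ) + 1))
      = fun j : Fin n => load f x ((j : ℕ) + 1))
    (w : ℕ → ℝ) (hw : IsGalerkinSol ε b c f y (n + 1) w) :
    (fun j : Fin n => Un ((j : ℕ) + 1) - w ((j : ℕ) + 1))
      = ((w (n + 1) - (1 - y (n + 1)) / (1 - x n) * w n)
            * bform ε b c (hatFn y (n + 1)) (hatDeriv y (n + 1)) (hatFn x n) (hatDeriv x n))
          • (A⁻¹ *ᵥ (fun j : Fin n => if (j : ℕ) = n - 1 then 1 else 0)) :=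
  statement6_general n x y ε b c f hf hx hy hagree A hA hAdet Un hUn w hw
end

section
/- (Theorem 3.1, geometric form.) Let 0 = x₀ < ⋯ < x_{n+1} = 1 be a grid, ε, b, c reals, f : [0,1] → ℝ continuous, A = (a(φⱼ, φᵢ))_{1≤i,j≤n} invertible, and Uⁿ ∈ ℝⁿ the solution of A·Uⁿ = F with Fⱼ = ∫₀¹ f·φⱼ. Let s, s' ∈ (xₙ, 1) be two choices of an added point, and let V = (v₁, …, vₙ, v_s) and V' = (v'₁, …, v'ₙ, v'_{s'}) solve the corresponding refined Galerkin systems. Fix 2 ≤ i ≤ n and assume (Uⁿ_{i−1} − v_{i−1})(Uⁿᵢ − vᵢ) < 0 and (Uⁿ_{i−1} − v'_{i−1})(Uⁿᵢ − v'ᵢ) < 0. Then the unique point t ∈ (x_{i−1}, xᵢ) at which the affine interpolant through (x_{i−1}, Uⁿ_{i−1}), (xᵢ, Uⁿᵢ) equals the affine interpolant through (x_{i−1}, v_{i−1}), (xᵢ, vᵢ) coincides with the corresponding unique point t' for V', and the common function values at t and t' are also equal; i.e. the intersection point Qᵢ of the two finite element solutions in (x_{i−1}, xᵢ) does not depend on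 the choice of the added point. -/
open Matrix MeasureTheory

/- ---------------- auxiliary lemmas ---------------- -/

lemma hat3_indep (l m r r' t : ℝ) (hlm : l < m) (ht : t ≤ m) :
    hat3 l m r t = hat3 l m r' t := by
  unfold hat3
  by_cases h1 : l ≤ t ∧ t ≤ m
  · simp [h1]
  · have h2 : ¬ (m ≤ t ∧ t ≤ r) := by
      rintro ⟨hm, _⟩; exact h1 ⟨le_trans hlm.le hm, ht⟩
    have h3 : ¬ (m ≤ t ∧ t ≤ r') := by
      rintro ⟨hm, _⟩; exact h1 ⟨le_trans hlm.le hm, ht⟩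
    simp [h1, h2, h3]

lemma hat3D_indep (l m r r' t : ℝ) (ht : t ≤ m) :
    hat3D l m r t = hat3D l m r' t := by
  unfold hat3D
  have h2 : ¬ (m < t ∧ t < r) := fun h => absurd ht (not_le.2 h.1)
  have h3 : ¬ (m < t ∧ t < r') := fun h => absurd ht (not_le.2 h.1)
  simp [h2, h3]

lemma hat3_zero_left (l m r t : ℝ) (hlm : l < m) (ht : t ≤ l) :
    hat3 l m r t = 0 := by
  unfold hat3
  by_cases h1 : l ≤ t ∧ t ≤ m
  · have heq : t = l := le_antisymm ht h1.1
    rw [if_pos h1, heq, sub_self, zero_div]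
  · have h2 : ¬ (m ≤ t ∧ t ≤ r) := fun h =>
      absurd (lt_of_lt_of_le hlm h.1) (not_lt.2 ht)
    simp [h1, h2]

lemma hat3D_zero_left (l m r t : ℝ) (hlm : l < m) (ht : t ≤ l) :
    hat3D l m r t = 0 := by
  unfold hat3D
  have h1 : ¬ (l < t ∧ t < m) := fun h => absurd ht (not_le.2 h.1)
  have h2 : ¬ (m < t ∧ t < r) := fun h =>
    absurd ht (not_le.2 (lt_trans hlm h.1))
  simp [h1, h2]

lemma hat3_supp (l m r t : ℝ) (hmr : m ≤ r) (h : hat3 l m r t ≠ 0) : t ≤ r := by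
  unfold hat3 at h
  by_cases h1 : l ≤ t ∧ t ≤ m
  · exact le_trans h1.2 hmr
  · by_cases h2 : m ≤ t ∧ t ≤ r
    · exact h2.2
    · simp [h1, h2] at h

lemma hat3D_supp (l m r t : ℝ) (hmr : m ≤ r) (h : hat3D l m r t ≠ 0) : t ≤ r := by
  unfold hat3D at h
  by_cases h1 : l < t ∧ t < m
  · exact le_trans h1.2.le hmr
  · by_cases h2 : m < t ∧ t < r
    · exact h2.2.le
    · simp [h1, h2] at h

lemma grid_mono {y : ℕ → ℝ} {N : ℕ} (h : IsGrid y N) {i j : ℕ}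
    (hij : i ≤ j) (hj : j ≤ N + 1) : y i ≤ y j := by
  induction j with
  | zero =>
    have : i = 0 := Nat.le_zero.mp hij
    rw [this]
  | succ k ih =>
    rcases Nat.lt_or_ge i (k + 1) with h' | h'
    · have h1 : y i ≤ y k := ih (Nat.lt_succ_iff.mp h') (by omega)
      exact le_trans h1 (h.2.2 k (by omega)).le
    · have : i = k + 1 := le_antisymm hij h'
      rw [this]

/-- The difference of two affine interpolants. -/
lemma affInterp_sub (α β u1 u2 v1 v2 t : ℝ) (h : β - α ≠ 0) :
    affInterp α β u1 u2 t - affInterp α β v1 v2 t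
      = (u1 - v1) + ((u2 - v2) - (u1 - v1)) * (t - α) / (β - α) := by
  unfold affInterp
  field_simp
  ring

/-- Key row identity: for test index `m ≤ n - 1` the refined Galerkin system row agrees
with the unrefined one. -/
lemma row_eq (ε b c : ℝ) (f : ℝ → ℝ) (n : ℕ) (x y : ℕ → ℝ)
    (hx : IsGrid x n) (hy : IsGrid y (n + 1)) (hagree : ∀ i ≤ n, y i = x i)
    (v : ℕ → ℝ) (hv : IsGalerkinSol ε b c f y (n + 1) v)
    (m : ℕ) (hm1 : 1 ≤ m) (hmn : m + 1 ≤ n) :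
    ∑ i ∈ Finset.Icc 1 n,
        v i * bform ε b c (hatFn x i) (hatDeriv x i) (hatFn x m) (hatDeriv x m)
      = load f x m := by
  have hn : 2 ≤ n := by omega
  -- the test hat function is the same on both grids
  have hFm : hatFn y m = hatFn x m := by
    unfold hatFn
    rw [hagree (m - 1) (by omega), hagree m (by omega), hagree (m + 1) (by omega)]
  have hDm : hatDeriv y m = hatDeriv x m := by
    unfold hatDeriv
    rw [hagree (m - 1) (by omega), hagree m (by omega), hagree (m + 1) (by omega)]
  -- support bound for the test functions
  have hxm1n : x (m + 1) ≤ x n := grid_mono hx hmn (by omega)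
  have hxm : x m ≤ x (m + 1) := (hx.2.2 m (by omega)).le
  have hsuppF : ∀ t : ℝ, hatFn x m t ≠ 0 → t ≤ x n := fun t h =>
    le_trans (hat3_supp _ _ _ _ hxm h) hxm1n
  have hsuppD : ∀ t : ℝ, hatDeriv x m t ≠ 0 → t ≤ x n := fun t h =>
    le_trans (hat3D_supp _ _ _ _ hxm h) hxm1n
  have hlm : x (n - 1) < x n := by
    have h1 := hx.2.2 (n - 1) (by omega)
    rwa [Nat.sub_add_cancel (by omega : 1 ≤ n)] at h1
  have hyn : y n = x n := hagree n le_rfl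
  have hs : x n < y (n + 1) := by
    have h1 := hy.2.2 n (by omega)
    rwa [hyn] at h1
  -- hat functions at interior nodes coincide where the test functions live
  have hFneq : ∀ t : ℝ, t ≤ x n → hatFn y n t = hatFn x n t := by
    intro t ht
    unfold hatFn
    rw [hagree (n - 1) (by omega), hagree n le_rfl]
    exact hat3_indep _ _ _ _ _ hlm ht
  have hDneq : ∀ t : ℝ, t ≤ x n → hatDeriv y n t = hatDeriv x n t := by
    intro t ht
    unfold hatDeriv
    rw [hagree (n - 1) (by omega), hagree n le_rfl]
    exact hat3D_indep _ _ _ _ _ ht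
  -- the new hat function vanishes where the test functions live
  have hFz : ∀ t : ℝ, t ≤ x n → hatFn y (n + 1) t = 0 := by
    intro t ht
    unfold hatFn
    have h1 : (n + 1 : ℕ) - 1 = n := by omega
    rw [h1, hyn]
    exact hat3_zero_left _ _ _ _ hs ht
  have hDz : ∀ t : ℝ, t ≤ x n → hatDeriv y (n + 1) t = 0 := by
    intro t ht
    unfold hatDeriv
    have h1 : (n + 1 : ℕ) - 1 = n := by omega
    rw [h1, hyn]
    exact hat3D_zero_left _ _ _ _ hs ht
  -- the Galerkin row on the refined grid
  have hrow := hv m hm1 (by omega)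
  rw [Finset.sum_Icc_succ_top (by omega : 1 ≤ n + 1)] at hrow
  -- the extra term vanishes
  have hz : bform ε b c (hatFn y (n + 1)) (hatDeriv y (n + 1)) (hatFn y m) (hatDeriv y m)
      = 0 := by
    rw [hFm, hDm]
    unfold bform
    have e1 : ∀ t : ℝ, hatDeriv y (n + 1) t * hatDeriv x m t = 0 := by
      intro t
      by_cases h : hatDeriv x m t = 0
      · rw [h, mul_zero]
      · rw [hDz t (hsuppD t h), zero_mul]
    have e2 : ∀ t : ℝ, hatFn y (n + 1) t * hatDeriv x m t = 0 := by
      intro t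
      by_cases h : hatDeriv x m t = 0
      · rw [h, mul_zero]
      · rw [hFz t (hsuppD t h), zero_mul]
    have e3 : ∀ t : ℝ, hatFn y (n + 1) t * hatFn x m t = 0 := by
      intro t
      by_cases h : hatFn x m t = 0
      · rw [h, mul_zero]
      · rw [hFz t (hsuppF t h), zero_mul]
    rw [intervalIntegral.integral_congr (g := fun _ => (0:ℝ)) (fun t _ => e1 t),
        intervalIntegral.integral_congr (g := fun _ => (0:ℝ)) (fun t _ => e2 t),
        intervalIntegral.integral_congr (g := fun _ => (0:ℝ)) (fun t _ => e3 t)]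
    simp
  rw [hz, mul_zero, add_zero] at hrow
  -- the remaining terms coincide with the unrefined ones
  have hterm : ∀ i ∈ Finset.Icc 1 n,
      v i * bform ε b c (hatFn y i) (hatDeriv y i) (hatFn y m) (hatDeriv y m)
        = v i * bform ε b c (hatFn x i) (hatDeriv x i) (hatFn x m) (hatDeriv x m) := by
    intro i hi
    rw [Finset.mem_Icc] at hi
    rw [hFm, hDm]
    by_cases hilt : i + 1 ≤ n
    · have hFi : hatFn y i = hatFn x i := by
        unfold hatFn
        rw [hagree (i - 1) (by omega), hagree i (by omega), hagree (i + 1) (by omega)]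
      have hDi : hatDeriv y i = hatDeriv x i := by
        unfold hatDeriv
        rw [hagree (i - 1) (by omega), hagree i (by omega), hagree (i + 1) (by omega)]
      rw [hFi, hDi]
    · have hieq : i = n := by omega
      subst hieq
      congr 1
      unfold bform
      have e1 : ∀ t : ℝ, hatDeriv y i t * hatDeriv x m t = hatDeriv x i t * hatDeriv x m t := by
        intro t
        by_cases h : hatDeriv x m t = 0
        · rw [h, mul_zero, mul_zero]
        · rw [hDneq t (hsuppD t h)]
      have e2 : ∀ t : ℝ, hatFn y i t * hatDeriv x m t = hatFn x i t * hatDeriv x m t := by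
        intro t
        by_cases h : hatDeriv x m t = 0
        · rw [h, mul_zero, mul_zero]
        · rw [hFneq t (hsuppD t h)]
      have e3 : ∀ t : ℝ, hatFn y i t * hatFn x m t = hatFn x i t * hatFn x m t := by
        intro t
        by_cases h : hatFn x m t = 0
        · rw [h, mul_zero, mul_zero]
        · rw [hFneq t (hsuppF t h)]
      rw [intervalIntegral.integral_congr (fun t _ => e1 t),
          intervalIntegral.integral_congr (fun t _ => e2 t),
          intervalIntegral.integral_congr (fun t _ => e3 t)]
  rw [Finset.sum_congr rfl hterm] at hrow
  rw [hrow]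
  unfold load
  rw [hFm]

set_option maxHeartbeats 4000000 in
/-- Theorem 3.1, geometric form: for two choices `s = y (n+1)` and
`s' = y' (n+1)` of the point added in `(xₙ, 1)`, with refined Galerkin solutions `v` and `v'`,
and for `2 ≤ i ≤ n` where the nodal differences with `Uⁿ` change sign for both, the unique
intersection point in `(x_{i−1}, xᵢ)` of the affine interpolant of `Uⁿ` with that of `v`
coincides with the one for `v'` (with equal function values there): the intersection `Qᵢ`
does not depend on the choice of the added point. -/
theorem statement7 (n : ℕ) (hn : 1 ≤ n) (x y y' : ℕ → ℝ) (ε b c : ℝ) (f : ℝ → ℝ)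
    (hf : ContinuousOn f (Set.Icc 0 1))
    (hx : IsGrid x n) (hy : IsGrid y (n + 1)) (hy' : IsGrid y' (n + 1))
    (hagree : ∀ i ≤ n, y i = x i) (hagree' : ∀ i ≤ n, y' i = x i)
    (A : Matrix (Fin n) (Fin n) ℝ) (hA : A = stiff ε b c x n) (hAdet : A.det ≠ 0)
    (Un : ℕ → ℝ)
    (hUn : A *ᵥ (fun j : Fin n => Un ((j : ℕ) + 1))
      = fun j : Fin n => load f x ((j : ℕ) + 1))
    (v v' : ℕ → ℝ)
    (hv : IsGalerkinSol ε b c f y (n + 1) v)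
    (hv' : IsGalerkinSol ε b c f y' (n + 1) v')
    (i : ℕ) (hi2 : 2 ≤ i) (hin : i ≤ n)
    (hsgn : (Un (i - 1) - v (i - 1)) * (Un i - v i) < 0)
    (hsgn' : (Un (i - 1) - v' (i - 1)) * (Un i - v' i) < 0) :
    ∃ t ∈ Set.Ioo (x (i - 1)) (x i),
      affInterp (x (i - 1)) (x i) (Un (i - 1)) (Un i) t
        = affInterp (x (i - 1)) (x i) (v (i - 1)) (v i) t ∧
      affInterp (x (i - 1)) (x i) (Un (i - 1)) (Un i) t
        = affInterp (x (i - 1)) (x i) (v' (i - 1)) (v' i) t ∧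
      ∀ t' ∈ Set.Ioo (x (i - 1)) (x i),
        (affInterp (x (i - 1)) (x i) (Un (i - 1)) (Un i) t'
            = affInterp (x (i - 1)) (x i) (v (i - 1)) (v i) t' ∨
          affInterp (x (i - 1)) (x i) (Un (i - 1)) (Un i) t'
            = affInterp (x (i - 1)) (x i) (v' (i - 1)) (v' i) t') → t' = t := by
  have hn2 : 2 ≤ n := le_trans hi2 hin
  -- conversion between Fin sums and Icc sums
  have conv : ∀ g : ℕ → ℝ, ∑ k : Fin n, g ((k : ℕ) + 1) = ∑ j ∈ Finset.Icc 1 n, g j := by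
    intro g
    rw [Fin.sum_univ_eq_sum_range (fun k => g (k + 1)) n]
    have h1 : Finset.Icc 1 n = Finset.Ico 1 (n + 1) := by
      ext a; simp [Nat.lt_succ_iff]
    rw [h1, Finset.sum_Ico_eq_sum_range]
    simp [add_comm]
  -- rows of hUn in Icc form
  have hUnrow : ∀ m, 1 ≤ m → m ≤ n →
      ∑ j ∈ Finset.Icc 1 n,
        Un j * bform ε b c (hatFn x j) (hatDeriv x j) (hatFn x m) (hatDeriv x m)
      = load f x m := by
    intro m hm1 hmn
    have hj : m - 1 < n := by omega
    have h1 := congrFun hUn ⟨m - 1, hj⟩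
    simp only [Matrix.mulVec, dotProduct, hA, stiff] at h1
    have hm : m - 1 + 1 = m := by omega
    rw [hm] at h1
    rw [← conv]
    rw [← h1]
    exact Finset.sum_congr rfl fun k _ => by ring
  -- the difference vectors
  set D : Fin n → ℝ := fun k => Un ((k : ℕ) + 1) - v ((k : ℕ) + 1) with hD
  set D' : Fin n → ℝ := fun k => Un ((k : ℕ) + 1) - v' ((k : ℕ) + 1) with hD'
  have hADrow : ∀ (w : ℕ → ℝ), IsGalerkinSol ε b c f y (n + 1) w →
      ∀ j : Fin n, (j : ℕ) < n - 1 →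
      (A *ᵥ fun k : Fin n => Un ((k : ℕ) + 1) - w ((k : ℕ) + 1)) j = 0 := by
    intro w hw j hjlt
    have hm1 : 1 ≤ (j : ℕ) + 1 := by omega
    have hmn : (j : ℕ) + 1 + 1 ≤ n := by omega
    have h1 := row_eq ε b c f n x y hx hy hagree w hw ((j : ℕ) + 1) hm1 hmn
    have h2 := hUnrow ((j : ℕ) + 1) hm1 (by omega)
    simp only [Matrix.mulVec, dotProduct, hA, stiff]
    have h3 : ∑ k : Fin n,
        bform ε b c (hatFn x ((k : ℕ) + 1)) (hatDeriv x ((k : ℕ) + 1))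
          (hatFn x ((j : ℕ) + 1)) (hatDeriv x ((j : ℕ) + 1))
          * (Un ((k : ℕ) + 1) - w ((k : ℕ) + 1))
        = ∑ m ∈ Finset.Icc 1 n, (Un m - w m) *
            bform ε b c (hatFn x m) (hatDeriv x m)
              (hatFn x ((j : ℕ) + 1)) (hatDeriv x ((j : ℕ) + 1)) := by
      rw [← conv]
      exact Finset.sum_congr rfl fun k _ => by ring
    rw [h3]
    have h4 : ∑ m ∈ Finset.Icc 1 n, (Un m - w m) *
        bform ε b c (hatFn x m) (hatDeriv x m)
          (hatFn x ((j : ℕ) + 1)) (hatDeriv x ((j : ℕ) + 1))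
        = (∑ m ∈ Finset.Icc 1 n, Un m *
            bform ε b c (hatFn x m) (hatDeriv x m)
              (hatFn x ((j : ℕ) + 1)) (hatDeriv x ((j : ℕ) + 1)))
          - ∑ m ∈ Finset.Icc 1 n, w m *
            bform ε b c (hatFn x m) (hatDeriv x m)
              (hatFn x ((j : ℕ) + 1)) (hatDeriv x ((j : ℕ) + 1)) := by
      rw [← Finset.sum_sub_distrib]
      exact Finset.sum_congr rfl fun k _ => by ring
    rw [h4, h2, h1, sub_self]
  have hADrow' : ∀ (w : ℕ → ℝ), IsGalerkinSol ε b c f y' (n + 1) w →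
      ∀ j : Fin n, (j : ℕ) < n - 1 →
      (A *ᵥ fun k : Fin n => Un ((k : ℕ) + 1) - w ((k : ℕ) + 1)) j = 0 := by
    intro w hw j hjlt
    have hm1 : 1 ≤ (j : ℕ) + 1 := by omega
    have hmn : (j : ℕ) + 1 + 1 ≤ n := by omega
    have h1 := row_eq ε b c f n x y' hx hy' hagree' w hw ((j : ℕ) + 1) hm1 hmn
    have h2 := hUnrow ((j : ℕ) + 1) hm1 (by omega)
    simp only [Matrix.mulVec, dotProduct, hA, stiff]
    have h3 : ∑ k : Fin n,
        bform ε b c (hatFn x ((k : ℕ) + 1)) (hatDeriv x ((k : ℕ) + 1))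
          (hatFn x ((j : ℕ) + 1)) (hatDeriv x ((j : ℕ) + 1))
          * (Un ((k : ℕ) + 1) - w ((k : ℕ) + 1))
        = ∑ m ∈ Finset.Icc 1 n, (Un m - w m) *
            bform ε b c (hatFn x m) (hatDeriv x m)
              (hatFn x ((j : ℕ) + 1)) (hatDeriv x ((j : ℕ) + 1)) := by
      rw [← conv]
      exact Finset.sum_congr rfl fun k _ => by ring
    rw [h3]
    have h4 : ∑ m ∈ Finset.Icc 1 n, (Un m - w m) *
        bform ε b c (hatFn x m) (hatDeriv x m)
          (hatFn x ((j : ℕ) + 1)) (hatDeriv x ((j : ℕ) + 1))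
        = (∑ m ∈ Finset.Icc 1 n, Un m *
            bform ε b c (hatFn x m) (hatDeriv x m)
              (hatFn x ((j : ℕ) + 1)) (hatDeriv x ((j : ℕ) + 1)))
          - ∑ m ∈ Finset.Icc 1 n, w m *
            bform ε b c (hatFn x m) (hatDeriv x m)
              (hatFn x ((j : ℕ) + 1)) (hatDeriv x ((j : ℕ) + 1)) := by
      rw [← Finset.sum_sub_distrib]
      exact Finset.sum_congr rfl fun k _ => by ring
    rw [h4, h2, h1, sub_self]
  have hAD : ∀ j : Fin n, (j : ℕ) < n - 1 → (A *ᵥ D) j = 0 :=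
    hADrow v hv
  have hAD' : ∀ j : Fin n, (j : ℕ) < n - 1 → (A *ᵥ D') j = 0 :=
    hADrow' v' hv'
  set jlast : Fin n := ⟨n - 1, by omega⟩ with hjlast
  have hjlastv : (jlast : ℕ) = n - 1 := rfl
  set κ : ℝ := (A *ᵥ D) jlast with hκ
  set κ' : ℝ := (A *ᵥ D') jlast with hκ'
  -- if the last row entry vanishes the whole difference vector vanishes
  have hzero : ∀ (E : Fin n → ℝ), (∀ j : Fin n, (j : ℕ) < n - 1 → (A *ᵥ E) j = 0) →
      (A *ᵥ E) jlast = 0 → E = 0 := by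
    intro E hE hlast
    apply Matrix.eq_zero_of_mulVec_eq_zero hAdet
    funext j
    by_cases hj : (j : ℕ) < n - 1
    · exact hE j hj
    · have : j = jlast := Fin.ext (by omega)
      rw [this]
      exact hlast
  -- Fin indices of the nodes i-1 and i
  set k1 : Fin n := ⟨i - 2, by omega⟩ with hk1
  set k2 : Fin n := ⟨i - 1, by omega⟩ with hk2
  have hk1v : D k1 = Un (i - 1) - v (i - 1) := by
    simp only [hD, hk1]
    congr 2 <;> omega
  have hk2v : D k2 = Un i - v i := by
    simp only [hD, hk2]
    congr 2 <;> omega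
  have hk1v' : D' k1 = Un (i - 1) - v' (i - 1) := by
    simp only [hD', hk1]
    congr 2 <;> omega
  have hk2v' : D' k2 = Un i - v' i := by
    simp only [hD', hk2]
    congr 2 <;> omega
  clear hf hv hv' hUn hUnrow hADrow hADrow' conv hA
  clear_value k2 k1 κ' κ jlast D' D
  obtain ⟨p, hp⟩ : ∃ p : ℝ, p = Un (i - 1) - v (i - 1) := ⟨_, rfl⟩
  obtain ⟨q, hq⟩ : ∃ q : ℝ, q = Un i - v i := ⟨_, rfl⟩
  obtain ⟨p', hp'⟩ : ∃ p' : ℝ, p' = Un (i - 1) - v' (i - 1) := ⟨_, rfl⟩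
  obtain ⟨q', hq'⟩ : ∃ q' : ℝ, q' = Un i - v' i := ⟨_, rfl⟩
  have hsgnpq : p * q < 0 := by rw [hp, hq]; exact hsgn
  have hsgnpq' : p' * q' < 0 := by rw [hp', hq']; exact hsgn'
  have hpne : p ≠ 0 := by intro h; rw [h, zero_mul] at hsgnpq; exact lt_irrefl 0 hsgnpq
  have hp'ne : p' ≠ 0 := by
    intro h; rw [h, zero_mul] at hsgnpq'; exact lt_irrefl 0 hsgnpq'
  have hκne : κ ≠ 0 := by
    intro h
    have hE := hzero D hAD (by rw [← hκ, h])
    apply hpne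
    rw [hp, ← hk1v, hE]
    rfl
  have hκ'ne : κ' ≠ 0 := by
    intro h
    have hE := hzero D' hAD' (by rw [← hκ', h])
    apply hp'ne
    rw [hp', ← hk1v', hE]
    rfl
  -- kernel argument: κ' • D - κ • D' = 0
  have hker : A *ᵥ (fun k => κ' * D k - κ * D' k) = 0 := by
    funext j
    have e : (A *ᵥ fun k => κ' * D k - κ * D' k) j
        = κ' * (A *ᵥ D) j - κ * (A *ᵥ D') j := by
      simp only [Matrix.mulVec, dotProduct]
      rw [Finset.mul_sum, Finset.mul_sum, ← Finset.sum_sub_distrib]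
      exact Finset.sum_congr rfl fun k _ => by ring
    rw [e]
    by_cases hj : (j : ℕ) < n - 1
    · rw [hAD j hj, hAD' j hj, mul_zero, mul_zero, sub_self]
      rfl
    · have hje : j = jlast := Fin.ext (by omega)
      rw [hje, ← hκ, ← hκ']
      show κ' * κ - κ * κ' = 0
      ring
  have hDD : (fun k => κ' * D k - κ * D' k) = 0 :=
    Matrix.eq_zero_of_mulVec_eq_zero hAdet hker
  have hprop1 : κ' * p = κ * p' := by
    have h1 := congrFun hDD k1
    rw [hk1v, hk1v', ← hp, ← hp'] at h1
    have h2 : κ' * p - κ * p' = 0 := h1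
    linarith
  have hprop2 : κ' * q = κ * q' := by
    have h1 := congrFun hDD k2
    rw [hk2v, hk2v', ← hq, ← hq'] at h1
    have h2 : κ' * q - κ * q' = 0 := h1
    linarith
  -- proportionality: p q' = p' q
  have hcross : p * q' = p' * q := by
    have h1 : κ' * (p * q') = κ' * (p' * q) := by
      have e1 : κ' * (p * q') = (κ' * p) * q' := by ring
      have e2 : κ' * (p' * q) = p' * (κ' * q) := by ring
      rw [e1, e2, hprop1, hprop2]
      ring
    exact mul_left_cancel₀ hκ'ne h1
  set α : ℝ := x (i - 1) with hα
  set β : ℝ := x i with hβ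
  have hαβ : α < β := by
    have h1 := hx.2.2 (i - 1) (by omega)
    have h2 : i - 1 + 1 = i := by omega
    rw [h2] at h1
    exact h1
  have hβα : β - α ≠ 0 := sub_ne_zero.mpr (ne_of_gt hαβ)
  have hpq : p - q ≠ 0 := by
    intro h
    have hqp : q = p := by linarith
    rw [hqp] at hsgnpq
    nlinarith
  have hp'q' : p' - q' ≠ 0 := by
    intro h
    have hqp : q' = p' := by linarith
    rw [hqp] at hsgnpq'
    nlinarith
  -- the common ratio
  have hratio : p / (p - q) = p' / (p' - q') := by
    rw [div_eq_div_iff hpq hp'q']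
    nlinarith [hcross]
  obtain ⟨r, hr⟩ : ∃ r : ℝ, r = p / (p - q) := ⟨_, rfl⟩
  have hr01 : 0 < r ∧ r < 1 := by
    rcases lt_trichotomy p 0 with hplt | hpeq | hpgt
    · have hqgt : 0 < q := by nlinarith
      have hd : p - q < 0 := by linarith
      constructor
      · rw [hr]; exact div_pos_of_neg_of_neg hplt hd
      · rw [hr, div_lt_iff_of_neg hd]
        linarith
    · exact absurd hpeq hpne
    · have hqlt : q < 0 := by nlinarith
      have hd : 0 < p - q := by linarith
      constructor
      · rw [hr]; exact div_pos hpgt hd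
      · rw [hr, div_lt_one hd]
        linarith
  obtain ⟨t, htdef⟩ : ∃ t : ℝ, t = α + r * (β - α) := ⟨_, rfl⟩
  have htmem : t ∈ Set.Ioo α β := by
    constructor
    · have h1 : 0 < r * (β - α) := mul_pos hr01.1 (by linarith)
      rw [htdef]; linarith
    · have h1 : r * (β - α) < 1 * (β - α) :=
        mul_lt_mul_of_pos_right hr01.2 (by linarith)
      rw [one_mul] at h1
      rw [htdef]; linarith
  -- vanishing of the difference at t (for v)
  have hdiff : affInterp α β (Un (i - 1)) (Un i) t
      - affInterp α β (v (i - 1)) (v i) t = 0 := by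
    rw [affInterp_sub _ _ _ _ _ _ _ hβα]
    rw [← hp, ← hq]
    have ht : t - α = p / (p - q) * (β - α) := by rw [htdef, hr]; ring
    rw [ht]
    field_simp
    ring
  -- vanishing of the difference at t (for v')
  have hdiff' : affInterp α β (Un (i - 1)) (Un i) t
      - affInterp α β (v' (i - 1)) (v' i) t = 0 := by
    rw [affInterp_sub _ _ _ _ _ _ _ hβα]
    rw [← hp', ← hq']
    have ht : t - α = p' / (p' - q') * (β - α) := by
      rw [htdef, hr, hratio]; ring
    rw [ht]
    field_simp
    ring
  refine ⟨t, htmem, by linarith [hdiff], by linarith [hdiff'], ?_⟩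
  -- uniqueness
  intro t' _ hteq
  rcases hteq with h | h
  · have hd0 : affInterp α β (Un (i - 1)) (Un i) t'
        - affInterp α β (v (i - 1)) (v i) t' = 0 := by linarith [h]
    rw [affInterp_sub _ _ _ _ _ _ _ hβα, ← hp, ← hq] at hd0
    have h2 : p * (β - α) + (q - p) * (t' - α) = 0 := by
      field_simp at hd0
      ring_nf at hd0 ⊢
      linarith [hd0]
    have h4 : t' - α = p / (p - q) * (β - α) := by
      rw [div_mul_eq_mul_div, eq_div_iff hpq]
      ring_nf at h2 ⊢
      linarith [h2]
    rw [htdef, hr]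
    linarith [h4]
  · have hd0 : affInterp α β (Un (i - 1)) (Un i) t'
        - affInterp α β (v' (i - 1)) (v' i) t' = 0 := by linarith [h]
    rw [affInterp_sub _ _ _ _ _ _ _ hβα, ← hp', ← hq'] at hd0
    have h2 : p' * (β - α) + (q' - p') * (t' - α) = 0 := by
      field_simp at hd0
      ring_nf at hd0 ⊢
      linarith [hd0]
    have h4 : t' - α = p' / (p' - q') * (β - α) := by
      rw [div_mul_eq_mul_div, eq_div_iff hp'q']
      ring_nf at h2 ⊢
      linarith [h2]
    rw [htdef, hr, hratio]
    linarith [h4]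
end

section
/- (Corollary 3.1.) Let 0 = x₀ < ⋯ < x_{n+1} = 1 be a grid, ε, b, c reals, f : [0,1] → ℝ continuous, A = (a(φⱼ, φᵢ))_{1≤i,j≤n} invertible, and Uⁿ ∈ ℝⁿ the solution of A·Uⁿ = F with Fⱼ = ∫₀¹ f·φⱼ. Let 0 < s₁ < ⋯ < s_m < x₁ and let (u_{s₁}, …, u_{s_m}, u₁, …, uₙ) solve the refined Galerkin system whose nodal basis consists of the hats at s₁, …, s_m, the hat φ̃₁ at x₁ on the refined grid (support [s_m, x₂]), and φ₂, …, φₙ. Then there is a scalar C such that Uⁿ − (u₁, …, uₙ) = C·A⁻¹e₁, where e₁ = (1, 0, …, 0)ᵗ. Consequently, for each 2 ≤ i ≤ n with a sign change of the nodal differences at x_{i−1} and xᵢ, the intersection point of the two piecewise linear solutions in (x_{i−1}, xᵢ) is independent of m and of the distribution of the added points. -/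
/-!
Every hat of the refined grid except `φ̃₁` either lives in `[0, x₁]` or is a coarse hat `φⱼ`,
`j ≥ 2`, and `φ̃₁` agrees with `φ₁` on `[x₁, 1]`, the only part of `[0, 1]` that meets the
support of `φⱼ` for `j ≥ 2`. So the coarse nodal values `u₁, …, uₙ` of the refined solution
satisfy rows `2, …, n` of `A U = F`, and `A (Uⁿ − u)` is a multiple of `e₁`. On each coarse cell
the difference of the two piecewise linear solutions is then `C` times one fixed affine function,
whose zero does not depend on `C`.
-/

open Matrix MeasureTheory

open Set

theorem IsGrid.strictMonoOn {y : ℕ → ℝ} {N : ℕ} (hy : IsGrid y N) :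
    StrictMonoOn y (Iic (N + 1)) :=
  strictMonoOn_Iic_of_lt_succ fun i hi => by simpa using hy.2.2 i (by omega)

theorem hat3_eq_zero_and_hat3D_eq_zero_of_le_left {l m r t : ℝ} (hlm : l < m) (ht : t ≤ l) :
    hat3 l m r t = 0 ∧ hat3D l m r t = 0 := by
  constructor
  · unfold hat3
    split_ifs with h1 h2
    · rw [le_antisymm ht h1.1, sub_self, zero_div]
    · linarith [h2.1]
    · rfl
  · unfold hat3D
    split_ifs with h1 h2
    · linarith [h1.1]
    · linarith [h2.1]
    · rfl

theorem hat3_eq_zero_and_hat3D_eq_zero_of_right_le {l m r t : ℝ} (hmr : m < r) (ht : r ≤ t) :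
    hat3 l m r t = 0 ∧ hat3D l m r t = 0 := by
  constructor
  · unfold hat3
    split_ifs with h1 h2
    · linarith [h1.2]
    · rw [le_antisymm h2.2 ht, sub_self, zero_div]
    · rfl
  · unfold hat3D
    split_ifs with h1 h2
    · linarith [h1.2]
    · linarith [h2.2]
    · rfl

theorem hat3_eq_and_hat3D_eq_of_lt {l m r t : ℝ} (l' : ℝ) (ht : m < t) :
    hat3 l m r t = hat3 l' m r t ∧ hat3D l m r t = hat3D l' m r t := by
  have h₁ : ¬ t ≤ m := not_le.mpr ht
  have h₂ : ¬ t < m := not_lt.mpr ht.le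
  simp [hat3, hat3D, h₁, h₂]

theorem bform_congr_left {ε b c : ℝ} {u uD u' uD' v vD : ℝ → ℝ}
    (h : ∀ t, (v t = 0 ∧ vD t = 0) ∨ (u t = u' t ∧ uD t = uD' t)) :
    bform ε b c u uD v vD = bform ε b c u' uD' v vD := by
  have h₁ : ∀ t, uD t * vD t = uD' t * vD t := fun t => by
    rcases h t with ⟨-, hvD⟩ | ⟨-, huD⟩ <;> simp [*]
  have h₂ : ∀ t, u t * vD t = u' t * vD t := fun t => by
    rcases h t with ⟨-, hvD⟩ | ⟨hu, -⟩ <;> simp [*]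
  have h₃ : ∀ t, u t * v t = u' t * v t := fun t => by
    rcases h t with ⟨hv, -⟩ | ⟨hu, -⟩ <;> simp [*]
  simp only [bform, h₁, h₂, h₃]

theorem bform_zero_left (ε b c : ℝ) (v vD : ℝ → ℝ) : bform ε b c 0 0 v vD = 0 := by
  simp [bform]

theorem IsGrid.hatFn_eq_zero_and_hatDeriv_eq_zero_of_le {x : ℕ → ℝ} {n j : ℕ} (hx : IsGrid x n)
    (hj2 : 2 ≤ j) (hjn : j ≤ n) {t : ℝ} (ht : t ≤ x 1) :
    hatFn x j t = 0 ∧ hatDeriv x j t = 0 := by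
  have hx1 : x 1 ≤ x (j - 1) :=
    hx.strictMonoOn.monotoneOn (mem_Iic.2 (by omega)) (mem_Iic.2 (by omega)) (by omega)
  have hxj : x (j - 1) < x j :=
    hx.strictMonoOn (mem_Iic.2 (by omega)) (mem_Iic.2 (by omega)) (by omega)
  exact hat3_eq_zero_and_hat3D_eq_zero_of_le_left hxj (ht.trans hx1)

theorem sum_Icc_one_add_eq_add_sum_fin (m n : ℕ) (g : ℕ → ℝ) :
    ∑ i ∈ Finset.Icc 1 (m + n), g i = ∑ i ∈ Finset.Icc 1 m, g i + ∑ k : Fin n, g (m + k + 1) := by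
  induction n with
  | zero => simp
  | succ n ih =>
    rw [← add_assoc, Finset.sum_Icc_succ_top (by omega), ih, Fin.sum_univ_castSucc, add_assoc]
    simp [add_assoc]

section RefinedGrid

variable {m n : ℕ} {x y : ℕ → ℝ} {ε b c : ℝ}

theorem hatFn_add_eq_and_hatDeriv_add_eq (hagree : ∀ i, 1 ≤ i → i ≤ n + 1 → y (m + i) = x i)
    {k : ℕ} (hk2 : 2 ≤ k) (hkn : k ≤ n) :
    hatFn y (m + k) = hatFn x k ∧ hatDeriv y (m + k) = hatDeriv x k := by
  have hl : y (m + k - 1) = x (k - 1) := by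
    rw [show m + k - 1 = m + (k - 1) by omega, hagree (k - 1) (by omega) (by omega)]
  have hr : y (m + k + 1) = x (k + 1) := by
    rw [add_assoc, hagree (k + 1) (by omega) (by omega)]
  simp only [hatFn, hatDeriv, hl, hr, hagree k (by omega) (by omega), and_self]

theorem bform_hatFn_eq_zero_of_le (hx : IsGrid x n) (hy : IsGrid y (m + n))
    (hagree : ∀ i, 1 ≤ i → i ≤ n + 1 → y (m + i) = x i)
    {i j : ℕ} (hi : i ≤ m) (hj2 : 2 ≤ j) (hjn : j ≤ n) :
    bform ε b c (hatFn y i) (hatDeriv y i) (hatFn x j) (hatDeriv x j) = 0 := by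
  rw [← bform_zero_left ε b c (hatFn x j) (hatDeriv x j)]
  apply bform_congr_left
  intro t
  rcases lt_or_ge t (x 1) with ht | ht
  · exact Or.inl (hx.hatFn_eq_zero_and_hatDeriv_eq_zero_of_le hj2 hjn ht.le)
  · have hyi : y (i + 1) ≤ y (m + 1) := hy.strictMonoOn.monotoneOn (mem_Iic.2 (by omega))
        (mem_Iic.2 (by omega)) (by omega)
    rw [hagree 1 le_rfl (by omega)] at hyi
    exact Or.inr (hat3_eq_zero_and_hat3D_eq_zero_of_right_le (hy.2.2 i (by omega)) (by linarith))

theorem bform_hatFn_add_one (hx : IsGrid x n) (hagree : ∀ i, 1 ≤ i → i ≤ n + 1 → y (m + i) = x i)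
    {j : ℕ} (hj2 : 2 ≤ j) (hjn : j ≤ n) :
    bform ε b c (hatFn y (m + 1)) (hatDeriv y (m + 1)) (hatFn x j) (hatDeriv x j)
      = bform ε b c (hatFn x 1) (hatDeriv x 1) (hatFn x j) (hatDeriv x j) := by
  apply bform_congr_left
  intro t
  rcases le_or_gt t (x 1) with ht | ht
  · exact Or.inl (hx.hatFn_eq_zero_and_hatDeriv_eq_zero_of_le hj2 hjn ht)
  · right
    simp only [hatFn, hatDeriv, add_assoc, hagree 1 le_rfl (by omega),
      hagree (1 + 1) (by omega) (by omega)]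
    exact hat3_eq_and_hat3D_eq_of_lt _ ht

theorem bform_hatFn_add (hx : IsGrid x n) (hagree : ∀ i, 1 ≤ i → i ≤ n + 1 → y (m + i) = x i)
    {k j : ℕ} (hk1 : 1 ≤ k) (hkn : k ≤ n) (hj2 : 2 ≤ j) (hjn : j ≤ n) :
    bform ε b c (hatFn y (m + k)) (hatDeriv y (m + k)) (hatFn x j) (hatDeriv x j)
      = bform ε b c (hatFn x k) (hatDeriv x k) (hatFn x j) (hatDeriv x j) := by
  rcases hk1.eq_or_lt with rfl | hk2
  · exact bform_hatFn_add_one hx hagree hj2 hjn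
  · obtain ⟨hφ, hφD⟩ := hatFn_add_eq_and_hatDeriv_add_eq hagree hk2 hkn
    rw [hφ, hφD]

theorem IsGalerkinSol.stiff_mulVec_apply {f : ℝ → ℝ} {w : ℕ → ℝ} (hx : IsGrid x n)
    (hy : IsGrid y (m + n)) (hagree : ∀ i, 1 ≤ i → i ≤ n + 1 → y (m + i) = x i)
    (hw : IsGalerkinSol ε b c f y (m + n) w) (i : Fin n) (hi : (i : ℕ) ≠ 0) :
    (stiff ε b c x n *ᵥ fun k : Fin n => w (m + k + 1)) i = load f x (i + 1) := by
  obtain ⟨hφ, hφD⟩ := hatFn_add_eq_and_hatDeriv_add_eq hagree (k := i + 1) (by omega) i.2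
  have hfine : ∑ k ∈ Finset.Icc 1 m,
      w k * bform ε b c (hatFn y k) (hatDeriv y k) (hatFn x (i + 1)) (hatDeriv x (i + 1)) = 0 :=
    Finset.sum_eq_zero fun k hk => by
      rw [bform_hatFn_eq_zero_of_le hx hy hagree (Finset.mem_Icc.1 hk).2 (by omega) i.2, mul_zero]
  have hrow := hw (m + (i + 1)) (by omega) (by omega)
  rw [sum_Icc_one_add_eq_add_sum_fin, hφ, hφD, hfine, zero_add, load, hφ] at hrow
  rw [load, ← hrow, mulVec, dotProduct]
  refine Finset.sum_congr rfl fun k _ => ?_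
  rw [stiff, mul_comm, add_assoc, bform_hatFn_add hx hagree (by omega) k.2 (by omega) i.2]

end RefinedGrid

theorem Matrix.exists_eq_smul_inv_mulVec_single {K ι : Type*} [CommRing K] [Fintype ι]
    [DecidableEq ι] {A : Matrix ι ι K} (hA : IsUnit A.det) {d : ι → K} {i₀ : ι}
    (h : ∀ i, i ≠ i₀ → (A *ᵥ d) i = 0) :
    ∃ C : K, d = C • (A⁻¹ *ᵥ Pi.single i₀ 1) := by
  refine ⟨(A *ᵥ d) i₀, ?_⟩
  have hAd : A *ᵥ d = (A *ᵥ d) i₀ • Pi.single i₀ 1 := by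
    ext i
    by_cases hi : i = i₀
    · subst hi; simp
    · simp [h i hi, hi]
  rw [← mulVec_smul, ← hAd, mulVec_mulVec, nonsing_inv_mul _ hA, one_mulVec]

theorem IsGalerkinSol.exists_sub_eq_smul_inv_mulVec {m n : ℕ} {x y : ℕ → ℝ} {ε b c : ℝ}
    {f : ℝ → ℝ} {Un w : ℕ → ℝ} (hn : 1 ≤ n) (hx : IsGrid x n) (hy : IsGrid y (m + n))
    (hagree : ∀ i, 1 ≤ i → i ≤ n + 1 → y (m + i) = x i) (hAdet : (stiff ε b c x n).det ≠ 0)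
    (hUn : stiff ε b c x n *ᵥ (fun j : Fin n => Un ((j : ℕ) + 1))
      = fun j : Fin n => load f x ((j : ℕ) + 1))
    (hw : IsGalerkinSol ε b c f y (m + n) w) :
    ∃ C : ℝ, (fun j : Fin n => Un ((j : ℕ) + 1) - w (m + (j : ℕ) + 1))
      = C • ((stiff ε b c x n)⁻¹ *ᵥ (fun j : Fin n => if (j : ℕ) = 0 then 1 else 0)) := by
  have he₁ : (fun j : Fin n => if (j : ℕ) = 0 then (1 : ℝ) else 0) = Pi.single ⟨0, hn⟩ 1 := by
    ext j
    simp [Pi.single_apply, Fin.ext_iff]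
  rw [he₁]
  refine exists_eq_smul_inv_mulVec_single (isUnit_iff_ne_zero.2 hAdet) fun i hi => ?_
  have hi₀ : (i : ℕ) ≠ 0 := fun h => hi (Fin.ext h)
  change (stiff ε b c x n *ᵥ ((fun j : Fin n => Un ((j : ℕ) + 1))
    - fun j : Fin n => w (m + (j : ℕ) + 1))) i = 0
  rw [mulVec_sub, Pi.sub_apply, hUn, hw.stiff_mulVec_apply hx hy hagree i hi₀, sub_self]

theorem affInterp_eq_affInterp_sub_mul_iff {α β ya yb p q K t : ℝ} (hαβ : α < β)
    (hpq : p * q < 0) (hK : K ≠ 0) :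
    affInterp α β ya yb t = affInterp α β (ya - K * p) (yb - K * q) t
      ↔ t = α + p * (β - α) / (p - q) := by
  have hβα : β - α ≠ 0 := sub_ne_zero.2 hαβ.ne'
  have hpq' : p - q ≠ 0 := fun h => by
    rw [sub_eq_zero.1 h] at hpq
    nlinarith [mul_self_nonneg q]
  have hdiff : affInterp α β ya yb t - affInterp α β (ya - K * p) (yb - K * q) t
      = K * (p - q) * (α + p * (β - α) / (p - q) - t) / (β - α) := by
    unfold affInterp
    field_simp
    ring
  rw [← sub_eq_zero, hdiff]
  simp only [div_eq_zero_iff, mul_eq_zero, hK, hpq', hβα, false_or, or_false, sub_eq_zero, eq_comm]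

theorem add_mul_div_sub_mem_Ioo {α β p q : ℝ} (hαβ : α < β) (hpq : p * q < 0) :
    α + p * (β - α) / (p - q) ∈ Ioo α β := by
  have hs : 0 < p / (p - q) ∧ p / (p - q) < 1 := by
    rcases mul_neg_iff.1 hpq with ⟨hp, hq⟩ | ⟨hp, hq⟩
    · have hd : 0 < p - q := by linarith
      exact ⟨div_pos hp hd, (div_lt_one hd).2 (by linarith)⟩
    · have hd : p - q < 0 := by linarith
      exact ⟨div_pos_of_neg_of_neg hp hd, (div_lt_one_of_neg hd).2 (by linarith)⟩
  rw [mul_div_right_comm]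
  constructor <;> nlinarith [hs.1, hs.2]

theorem exists_unique_crossing_of_sub_eq_mul {α β ua ub wa wb wa' wb' p q C C' : ℝ}
    (hαβ : α < β) (ha : ua - wa = C * p) (hb : ub - wb = C * q)
    (ha' : ua - wa' = C' * p) (hb' : ub - wb' = C' * q)
    (hs : (ua - wa) * (ub - wb) < 0) (hs' : (ua - wa') * (ub - wb') < 0) :
    ∃ t ∈ Ioo α β,
      affInterp α β ua ub t = affInterp α β wa wb t ∧
      affInterp α β ua ub t = affInterp α β wa' wb' t ∧
      ∀ t' ∈ Ioo α β,
        (affInterp α β ua ub t' = affInterp α β wa wb t' ∨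
          affInterp α β ua ub t' = affInterp α β wa' wb' t') → t' = t := by
  rw [ha, hb] at hs
  rw [ha', hb'] at hs'
  have hpq : p * q < 0 := by
    by_contra! h
    nlinarith [mul_nonneg (mul_self_nonneg C) h]
  have hC : C ≠ 0 := by rintro rfl; simp at hs
  have hC' : C' ≠ 0 := by rintro rfl; simp at hs'
  obtain rfl : wa = ua - C * p := by linarith
  obtain rfl : wb = ub - C * q := by linarith
  obtain rfl : wa' = ua - C' * p := by linarith
  obtain rfl : wb' = ub - C' * q := by linarith
  simp only [affInterp_eq_affInterp_sub_mul_iff hαβ hpq hC,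
    affInterp_eq_affInterp_sub_mul_iff hαβ hpq hC', or_self]
  exact ⟨_, add_mul_div_sub_mem_Ioo hαβ hpq, rfl, rfl, fun _ _ => id⟩

theorem sub_eq_mul_of_eq_smul {m n : ℕ} {Un w : ℕ → ℝ} {C : ℝ} {v : Fin n → ℝ}
    (h : (fun j : Fin n => Un ((j : ℕ) + 1) - w (m + (j : ℕ) + 1)) = C • v) {k : ℕ}
    (hk1 : 1 ≤ k) (hkn : k ≤ n) : Un k - w (m + k) = C * v ⟨k - 1, by omega⟩ := by
  obtain ⟨k, rfl⟩ : ∃ k', k = k' + 1 := ⟨k - 1, by omega⟩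
  simpa [add_assoc] using congrFun h ⟨k, by omega⟩

theorem statement9_general (n m m' : ℕ) (hn : 1 ≤ n)
    (x y y' : ℕ → ℝ) (ε b c : ℝ) (f : ℝ → ℝ)
    (hx : IsGrid x n) (hy : IsGrid y (m + n)) (hy' : IsGrid y' (m' + n))
    (hagree : ∀ i, 1 ≤ i → i ≤ n + 1 → y (m + i) = x i)
    (hagree' : ∀ i, 1 ≤ i → i ≤ n + 1 → y' (m' + i) = x i)
    (A : Matrix (Fin n) (Fin n) ℝ) (hA : A = stiff ε b c x n) (hAdet : A.det ≠ 0)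
    (Un : ℕ → ℝ)
    (hUn : A *ᵥ (fun j : Fin n => Un ((j : ℕ) + 1))
      = fun j : Fin n => load f x ((j : ℕ) + 1))
    (w w' : ℕ → ℝ)
    (hw : IsGalerkinSol ε b c f y (m + n) w)
    (hw' : IsGalerkinSol ε b c f y' (m' + n) w') :
    (∃ C : ℝ, (fun j : Fin n => Un ((j : ℕ) + 1) - w (m + (j : ℕ) + 1))
        = C • (A⁻¹ *ᵥ (fun j : Fin n => if (j : ℕ) = 0 then 1 else 0))) ∧
    (∃ C' : ℝ, (fun j : Fin n => Un ((j : ℕ) + 1) - w' (m' + (j : ℕ) + 1))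
        = C' • (A⁻¹ *ᵥ (fun j : Fin n => if (j : ℕ) = 0 then 1 else 0))) ∧
    (∀ i : ℕ, 2 ≤ i → i ≤ n →
      (Un (i - 1) - w (m + i - 1)) * (Un i - w (m + i)) < 0 →
      (Un (i - 1) - w' (m' + i - 1)) * (Un i - w' (m' + i)) < 0 →
      ∃ t ∈ Set.Ioo (x (i - 1)) (x i),
        affInterp (x (i - 1)) (x i) (Un (i - 1)) (Un i) t
          = affInterp (x (i - 1)) (x i) (w (m + i - 1)) (w (m + i)) t ∧
        affInterp (x (i - 1)) (x i) (Un (i - 1)) (Un i) t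
          = affInterp (x (i - 1)) (x i) (w' (m' + i - 1)) (w' (m' + i)) t ∧
        ∀ t' ∈ Set.Ioo (x (i - 1)) (x i),
          (affInterp (x (i - 1)) (x i) (Un (i - 1)) (Un i) t'
              = affInterp (x (i - 1)) (x i) (w (m + i - 1)) (w (m + i)) t' ∨
            affInterp (x (i - 1)) (x i) (Un (i - 1)) (Un i) t'
              = affInterp (x (i - 1)) (x i) (w' (m' + i - 1)) (w' (m' + i)) t') → t' = t) := by
  subst hA
  obtain ⟨C, hC⟩ := hw.exists_sub_eq_smul_inv_mulVec hn hx hy hagree hAdet hUn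
  obtain ⟨C', hC'⟩ := hw'.exists_sub_eq_smul_inv_mulVec hn hx hy' hagree' hAdet hUn
  refine ⟨⟨C, hC⟩, ⟨C', hC'⟩, fun i hi2 hin hs hs' => ?_⟩
  have hcell : x (i - 1) < x i :=
    hx.strictMonoOn (mem_Iic.2 (by omega)) (mem_Iic.2 (by omega)) (by omega)
  rw [show m + i - 1 = m + (i - 1) by omega] at hs ⊢
  rw [show m' + i - 1 = m' + (i - 1) by omega] at hs' ⊢
  exact exists_unique_crossing_of_sub_eq_mul hcell
    (sub_eq_mul_of_eq_smul hC (by omega) (by omega))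
    (sub_eq_mul_of_eq_smul hC (by omega) hin)
    (sub_eq_mul_of_eq_smul hC' (by omega) (by omega))
    (sub_eq_mul_of_eq_smul hC' (by omega) hin) hs hs'

/-- Corollary 3.1: if `w` solves the refined Galerkin system on the grid `y`
obtained from `x` by inserting `m` points `s_k = y k` in `(0, x₁)` (so that the old nodes
satisfy `y (m+i) = x i`), then there is a scalar `C` with
`Uⁿ − (u₁, …, uₙ) = C·A⁻¹e₁` where `e₁ = (1, 0, …, 0)ᵗ` and `uᵢ = w (m+i)`; the same holds
for a second refinement `(y', m', w')`, and consequently for each `2 ≤ i ≤ n` with a sign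
change of the nodal differences at `x_{i−1}` and `xᵢ`, the intersection point of the two
piecewise linear solutions in `(x_{i−1}, xᵢ)` is independent of `m` and of the distribution
of the added points. -/
theorem statement9 (n m m' : ℕ) (hn : 1 ≤ n) (hm : 1 ≤ m) (hm' : 1 ≤ m')
    (x y y' : ℕ → ℝ) (ε b c : ℝ) (f : ℝ → ℝ)
    (hf : ContinuousOn f (Set.Icc 0 1))
    (hx : IsGrid x n) (hy : IsGrid y (m + n)) (hy' : IsGrid y' (m' + n))
    (hagree : ∀ i, 1 ≤ i → i ≤ n + 1 → y (m + i) = x i)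
    (hagree' : ∀ i, 1 ≤ i → i ≤ n + 1 → y' (m' + i) = x i)
    (A : Matrix (Fin n) (Fin n) ℝ) (hA : A = stiff ε b c x n) (hAdet : A.det ≠ 0)
    (Un : ℕ → ℝ)
    (hUn : A *ᵥ (fun j : Fin n => Un ((j : ℕ) + 1))
      = fun j : Fin n => load f x ((j : ℕ) + 1))
    (w w' : ℕ → ℝ)
    (hw : IsGalerkinSol ε b c f y (m + n) w)
    (hw' : IsGalerkinSol ε b c f y' (m' + n) w') :
    (∃ C : ℝ, (fun j : Fin n => Un ((j : ℕ) + 1) - w (m + (j : ℕ) + 1))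
        = C • (A⁻¹ *ᵥ (fun j : Fin n => if (j : ℕ) = 0 then 1 else 0))) ∧
    (∃ C' : ℝ, (fun j : Fin n => Un ((j : ℕ) + 1) - w' (m' + (j : ℕ) + 1))
        = C' • (A⁻¹ *ᵥ (fun j : Fin n => if (j : ℕ) = 0 then 1 else 0))) ∧
    (∀ i : ℕ, 2 ≤ i → i ≤ n →
      (Un (i - 1) - w (m + i - 1)) * (Un i - w (m + i)) < 0 →
      (Un (i - 1) - w' (m' + i - 1)) * (Un i - w' (m' + i)) < 0 →
      ∃ t ∈ Set.Ioo (x (i - 1)) (x i),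
        affInterp (x (i - 1)) (x i) (Un (i - 1)) (Un i) t
          = affInterp (x (i - 1)) (x i) (w (m + i - 1)) (w (m + i)) t ∧
        affInterp (x (i - 1)) (x i) (Un (i - 1)) (Un i) t
          = affInterp (x (i - 1)) (x i) (w' (m' + i - 1)) (w' (m' + i)) t ∧
        ∀ t' ∈ Set.Ioo (x (i - 1)) (x i),
          (affInterp (x (i - 1)) (x i) (Un (i - 1)) (Un i) t'
              = affInterp (x (i - 1)) (x i) (w (m + i - 1)) (w (m + i)) t' ∨
            affInterp (x (i - 1)) (x i) (Un (i - 1)) (Un i) t'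
              = affInterp (x (i - 1)) (x i) (w' (m' + i - 1)) (w' (m' + i)) t') → t' = t) :=
  statement9_general n m m' hn x y y' ε b c f hx hy hy' hagree hagree' A hA hAdet Un hUn w w' hw hw'
end

section
/- (Lemma 5.1, Cramer form.) Let 0 = x₀ < ⋯ < x_{n+1} = 1 be a grid, ε, b, c reals, f : [0,1] → ℝ continuous, A = (a(φⱼ, φᵢ))_{1≤i,j≤n} invertible, and Uⁿ ∈ ℝⁿ the solution of A·Uⁿ = F with Fⱼ = ∫₀¹ f·φⱼ. Let xₙ < s₁ < ⋯ < s_m < 1 and let (u₁, …, uₙ, u_{s₁}, …, u_{s_m}) solve the refined Galerkin system, with C the scalar satisfying Uⁿ − (u₁, …, uₙ) = C·A⁻¹eₙ, and assume C ≠ 0. For 1 ≤ j ≤ n let Aⱼ denote the matrix A with its j-th column replaced by eₙ = (0, …, 0, 1)ᵗ. Then for each 2 ≤ i ≤ n: (i) Uⁿᵢ − uᵢ = C·det(Aᵢ)/det(A); (ii) the piecewise linear functions with nodal values Uⁿ and (u₁, …, uₙ) differ at both x_{i−1} and xᵢ and intersect at an interior point of (x_{i−1}, xᵢ) if and only if det(Aᵢ)·det(A_{i−1})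 < 0; (iii) in that case the unique intersection point is Qᵢ = ((rᵢ·xᵢ + x_{i−1})/(rᵢ + 1), (rᵢ·Uⁿᵢ + Uⁿ_{i−1})/(rᵢ + 1)) with rᵢ = |det(A_{i−1})/det(Aᵢ)|. -/
open Matrix MeasureTheory

/-!
Since `Uⁿ − u = C·A⁻¹eₙ`, Cramer's rule makes the error at node `xᵢ` equal to `κ·det Aᵢ` with the
nonzero constant `κ = C / det A`.
On `[x_{i−1}, xᵢ]` the two interpolants cross exactly where the linear interpolant of the errors
vanishes; an affine function with end values `d₁, d₂` has an interior zero iff `d₁ d₂ < 0`, and the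
zero splits the interval in the ratio `|d₁| : |d₂|`, which the common factor `κ` does not change.
-/

theorem Matrix.inv_mulVec_apply_eq_det_updateCol {n K : Type*} [Fintype n] [DecidableEq n]
    [Field K] (A : Matrix n n K) (v : n → K) (j : n) :
    (A⁻¹ *ᵥ v) j = (A.updateCol j v).det / A.det := by
  rw [Matrix.inv_def, Ring.inverse_eq_inv', Matrix.smul_mulVec,
    ← Matrix.cramer_eq_adjugate_mulVec, Pi.smul_apply, Matrix.cramer_apply,
    smul_eq_mul, div_eq_inv_mul]

section affInterp

variable {α β a₁ a₂ b₁ b₂ d₁ d₂ r t : ℝ}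

theorem affInterp_sub_affInterp :
    affInterp α β a₁ a₂ t - affInterp α β b₁ b₂ t = affInterp α β (a₁ - b₁) (a₂ - b₂) t := by
  unfold affInterp
  ring

theorem affInterp_eq_affInterp_iff :
    affInterp α β a₁ a₂ t = affInterp α β b₁ b₂ t ↔ affInterp α β (a₁ - b₁) (a₂ - b₂) t = 0 := by
  rw [← affInterp_sub_affInterp, sub_eq_zero]

theorem sub_mul_affInterp (h : α ≠ β) :
    (β - α) * affInterp α β a₁ a₂ t = a₁ * (β - t) + a₂ * (t - α) := by
  have : β - α ≠ 0 := sub_ne_zero.mpr h.symm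
  unfold affInterp
  field_simp
  ring

theorem affInterp_injective (h : α ≠ β) (ha : a₁ ≠ a₂) :
    Function.Injective (affInterp α β a₁ a₂) := by
  intro t t' htt'
  have key := congrArg ((β - α) * ·) htt'
  simp only [sub_mul_affInterp h] at key
  have : (a₂ - a₁) * (t - t') = 0 := by linarith
  exact sub_eq_zero.mp ((mul_eq_zero.mp this).resolve_left (sub_ne_zero.mpr ha.symm))

theorem affInterp_div_add_one (h : α ≠ β) (hr : r + 1 ≠ 0) :
    affInterp α β a₁ a₂ ((r * β + α) / (r + 1)) = (r * a₂ + a₁) / (r + 1) := by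
  have : β - α ≠ 0 := sub_ne_zero.mpr h.symm
  unfold affInterp
  field_simp
  ring

theorem div_add_one_mem_Ioo (h : α < β) (hr : 0 < r) : (r * β + α) / (r + 1) ∈ Set.Ioo α β := by
  constructor
  · rw [lt_div_iff₀ (by linarith)]
    nlinarith
  · rw [div_lt_iff₀ (by linarith)]
    linarith

theorem affInterp_eq_zero_of_mul_neg (h : α ≠ β) (hd : d₁ * d₂ < 0) :
    affInterp α β d₁ d₂ ((|d₁ / d₂| * β + α) / (|d₁ / d₂| + 1)) = 0 := by
  have hd₂ : d₂ ≠ 0 := by rintro rfl; simp at hd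
  have hneg : d₁ / d₂ < 0 := by
    rw [← mul_div_mul_right d₁ d₂ hd₂]
    exact div_neg_of_neg_of_pos hd (mul_self_pos.mpr hd₂)
  have hr : |d₁ / d₂| = -(d₁ / d₂) := abs_of_neg hneg
  rw [affInterp_div_add_one h (by positivity), hr]
  field_simp
  ring

theorem exists_affInterp_eq_zero_iff (h : α < β) :
    (d₁ ≠ 0 ∧ d₂ ≠ 0 ∧ ∃ t ∈ Set.Ioo α β, affInterp α β d₁ d₂ t = 0) ↔ d₁ * d₂ < 0 := by
  constructor
  · rintro ⟨-, hd₂, t, ⟨hαt, htβ⟩, ht⟩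
    have hzero : d₁ * (β - t) + d₂ * (t - α) = 0 := by
      rw [← sub_mul_affInterp h.ne, ht, mul_zero]
    have : d₁ * d₂ * ((β - t) * (t - α)) = -(d₂ * (t - α)) ^ 2 := by
      linear_combination d₂ * (t - α) * hzero
    have hpos : 0 < (β - t) * (t - α) := mul_pos (by linarith) (by linarith)
    have hsq : 0 < (d₂ * (t - α)) ^ 2 := by
      have := sub_ne_zero.mpr hαt.ne'
      positivity
    nlinarith
  · intro hd
    refine ⟨by rintro rfl; simp at hd, by rintro rfl; simp at hd, _,
      div_add_one_mem_Ioo h (abs_pos.mpr (div_ne_zero ?_ ?_)), affInterp_eq_zero_of_mul_neg h.ne hd⟩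
    all_goals rintro rfl; simp at hd

end affInterp

/-- Lemma 5.1, Cramer form: with `Uⁿ − (u₁, …, uₙ) = C·A⁻¹eₙ`, `C ≠ 0`, and
`Aⱼ` the matrix `A` with the column corresponding to node `xⱼ` replaced by `eₙ`, for each
`2 ≤ i ≤ n`: (i) `Uⁿᵢ − uᵢ = C·det(Aᵢ)/det(A)`; (ii) the two piecewise linear solutions differ
at both `x_{i−1}` and `xᵢ` and intersect inside `(x_{i−1}, xᵢ)` iff `det(Aᵢ)·det(A_{i−1}) < 0`;
(iii) in that case the unique intersection point is
`Qᵢ = ((rᵢxᵢ + x_{i−1})/(rᵢ+1), (rᵢUⁿᵢ + Uⁿ_{i−1})/(rᵢ+1))` with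
`rᵢ = |det(A_{i−1})/det(Aᵢ)|`. -/
theorem statement14 (n : ℕ)
    (x : ℕ → ℝ)
    (hx : IsGrid x n)
    (A : Matrix (Fin n) (Fin n) ℝ) (hAdet : A.det ≠ 0)
    (Un : ℕ → ℝ)
    (w : ℕ → ℝ)
    (en : Fin n → ℝ)
    (C : ℝ)
    (hC : (fun j : Fin n => Un ((j : ℕ) + 1) - w ((j : ℕ) + 1)) = C • (A⁻¹ *ᵥ en))
    (hC0 : C ≠ 0) :
    ∀ i : ℕ, ∀ hi2 : 2 ≤ i, ∀ hin : i ≤ n,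
      (Un i - w i
          = C * (A.updateCol (⟨i - 1, by omega⟩ : Fin n) en).det / A.det) ∧
      ((Un (i - 1) - w (i - 1) ≠ 0 ∧ Un i - w i ≠ 0 ∧
          ∃ t ∈ Set.Ioo (x (i - 1)) (x i),
            affInterp (x (i - 1)) (x i) (Un (i - 1)) (Un i) t
              = affInterp (x (i - 1)) (x i) (w (i - 1)) (w i) t)
        ↔ (A.updateCol (⟨i - 1, by omega⟩ : Fin n) en).det
            * (A.updateCol (⟨i - 2, by omega⟩ : Fin n) en).det < 0) ∧
      ((A.updateCol (⟨i - 1, by omega⟩ : Fin n) en).det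
          * (A.updateCol (⟨i - 2, by omega⟩ : Fin n) en).det < 0 →
        let r := |(A.updateCol (⟨i - 2, by omega⟩ : Fin n) en).det
            / (A.updateCol (⟨i - 1, by omega⟩ : Fin n) en).det|
        ∃ t ∈ Set.Ioo (x (i - 1)) (x i),
          affInterp (x (i - 1)) (x i) (Un (i - 1)) (Un i) t
            = affInterp (x (i - 1)) (x i) (w (i - 1)) (w i) t ∧
          (∀ t' ∈ Set.Ioo (x (i - 1)) (x i),
            affInterp (x (i - 1)) (x i) (Un (i - 1)) (Un i) t'
              = affInterp (x (i - 1)) (x i) (w (i - 1)) (w i) t' → t' = t) ∧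
          t = (r * x i + x (i - 1)) / (r + 1) ∧
          affInterp (x (i - 1)) (x i) (Un (i - 1)) (Un i) t
            = (r * Un i + Un (i - 1)) / (r + 1)) := by
  intro i hi2 hin
  have herr (k : Fin n) : Un (k + 1) - w (k + 1) = C / A.det * (A.updateCol k en).det := by
    rw [congrFun hC k, Pi.smul_apply, Matrix.inv_mulVec_apply_eq_det_updateCol, smul_eq_mul,
      mul_div_assoc']
    ring
  set D₁ := (A.updateCol (⟨i - 1, by omega⟩ : Fin n) en).det
  set D₂ := (A.updateCol (⟨i - 2, by omega⟩ : Fin n) en).det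
  set κ := C / A.det
  have hκ : κ ≠ 0 := div_ne_zero hC0 hAdet
  have he₁ : Un i - w i = κ * D₁ := by
    simpa only [show i - 1 + 1 = i by omega] using herr ⟨i - 1, by omega⟩
  have he₂ : Un (i - 1) - w (i - 1) = κ * D₂ := by
    simpa only [show i - 2 + 1 = i - 1 by omega] using herr ⟨i - 2, by omega⟩
  have hlt : x (i - 1) < x i := by
    simpa only [show i - 1 + 1 = i by omega] using hx.2.2 (i - 1) (by omega)
  have hsign : (κ * D₂) * (κ * D₁) < 0 ↔ D₁ * D₂ < 0 := by
    rw [show κ * D₂ * (κ * D₁) = κ ^ 2 * (D₁ * D₂) by ring]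
    have hκ2 : 0 < κ ^ 2 := by positivity
    exact ⟨fun h => neg_of_mul_neg_right h hκ2.le, mul_neg_of_pos_of_neg hκ2⟩
  have hratio : |κ * D₂ / (κ * D₁)| = |D₂ / D₁| := by rw [mul_div_mul_left _ _ hκ]
  simp only [affInterp_eq_affInterp_iff, he₁, he₂]
  refine ⟨div_mul_eq_mul_div C A.det D₁, by rw [exists_affInterp_eq_zero_iff hlt, hsign],
    fun hD => ?_⟩
  have hd := hsign.mpr hD
  have hcross := hratio ▸ affInterp_eq_zero_of_mul_neg hlt.ne hd
  have hd₁₂ : κ * D₂ ≠ κ * D₁ := fun h => by rw [h] at hd; nlinarith [mul_self_nonneg (κ * D₁)]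
  have hr : 0 < |D₂ / D₁| := abs_pos.mpr (div_ne_zero (by rintro h; simp [h] at hD)
    (by rintro h; simp [h] at hD))
  exact ⟨_, div_add_one_mem_Ioo hlt hr, hcross,
    fun t' _ ht' => affInterp_injective hlt.ne hd₁₂ (ht'.trans hcross.symm), rfl,
    affInterp_div_add_one hlt.ne (by positivity)⟩
end
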